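/- arXiv:1806.00302 — 7 statements merged into one kernel-verified Lean document; each statement's English description precedes it below -/
import Mathlib

section
/- Let n, m be positive integers with n ≥ 3 and m > C(n,2). Then sg(K_{n,m}) = m + 1 − C(n−1,2). -/
/-- A selection of fixed geodesics between pairs of vertices of `S`:
each element of `P` is a walk whose endpoints lie in `S`, which is a shortest path,
with at most one walk per ordered pair of endpoints, and with the walks chosen for
the two orderings of a pair being reverses of each other. -/
def IsGeodesicSelection {V : Type*} (G : SimpleGraph V) (S : Set V)
    (P : Set ((u : V) × (v : V) × G.Walk u v)) : Prop :=
  (∀ q ∈ P, q.1 ∈ S ∧ q.2.1 ∈ S ∧ q.2.2.IsPath ∧ q.2.2.length = G.dist q.1 q.2.1) ∧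
  (∀ q ∈ P, ∀ q' ∈ P,
    (q.1 = q'.1 ∧ q.2.1 = q'.2.1 → q = q') ∧
    (q.1 = q'.2.1 ∧ q.2.1 = q'.1 → q.2.2.support = q'.2.2.support.reverse))

/-- `S` is a strong geodetic set of `G` if one can fix one shortest path between
each pair of vertices of `S` so that all vertices of `G` are covered. -/
def IsStrongGeodeticSet {V : Type*} (G : SimpleGraph V) (S : Set V) : Prop :=
  ∃ P, IsGeodesicSelection G S P ∧ ∀ w : V, ∃ q ∈ P, w ∈ q.2.2.support

/-- The strong geodetic number: minimum size of a strong geodetic set. -/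
noncomputable def strongGeodeticNumber {V : Type*} (G : SimpleGraph V) : ℕ :=
  sInf {k | ∃ S : Set V, S.ncard = k ∧ IsStrongGeodeticSet G S}

namespace SGAux

open SimpleGraph Sum

variable {n m : ℕ}

/-- Abbreviation for the complete bipartite graph. -/
abbrev KG (n m : ℕ) : SimpleGraph (Fin n ⊕ Fin m) := completeBipartiteGraph (Fin n) (Fin m)

lemma adj_lr (i : Fin n) (x : Fin m) : (KG n m).Adj (inl i) (inr x) := by
  simp [completeBipartiteGraph]

lemma adj_rl (x : Fin m) (i : Fin n) : (KG n m).Adj (inr x) (inl i) := by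
  simp [completeBipartiteGraph]

lemma not_adj_ll (i j : Fin n) : ¬ (KG n m).Adj (inl i) (inl j) := by
  simp [completeBipartiteGraph]

lemma not_adj_rr (x y : Fin m) : ¬ (KG n m).Adj (inr x) (inr y) := by
  simp [completeBipartiteGraph]

/-- The length-2 walk between two left vertices through a right vertex. -/
def wll (i j : Fin n) (x : Fin m) : (KG n m).Walk (inl i) (inl j) :=
  SimpleGraph.Walk.cons (adj_lr i x) (SimpleGraph.Walk.cons (adj_rl x j) SimpleGraph.Walk.nil)

@[simp] lemma wll_length (i j : Fin n) (x : Fin m) : (wll i j x).length = 2 := rfl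

@[simp] lemma wll_support (i j : Fin n) (x : Fin m) :
    (wll i j x).support = [inl i, inr x, inl j] := rfl

lemma dist_ll (hm : 0 < m) {i j : Fin n} (hij : i ≠ j) :
    (KG n m).dist (inl i) (inl j) = 2 := by
  have h2 : (KG n m).dist (inl i) (inl j) ≤ 2 := by
    simpa using SimpleGraph.dist_le (wll i j ⟨0, hm⟩)
  have h0 : (KG n m).dist (inl i) (inl j) ≠ 0 := by
    intro heq
    rcases SimpleGraph.dist_eq_zero_iff_eq_or_not_reachable.mp heq with he | hnr
    · exact hij (by simpa using he)
    · exact hnr (wll i j ⟨0, hm⟩).reachable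
  have h1 : (KG n m).dist (inl i) (inl j) ≠ 1 := by
    intro heq
    exact not_adj_ll i j (SimpleGraph.dist_eq_one_iff_adj.mp heq)
  omega

lemma dist_le_two (hn : 0 < n) (hm : 0 < m) (u v : Fin n ⊕ Fin m) :
    (KG n m).dist u v ≤ 2 := by
  obtain (i | x) := u <;> obtain (j | y) := v
  · rcases eq_or_ne i j with rfl | h
    · simp [SimpleGraph.dist_self]
    · exact le_of_eq (dist_ll hm h)
  · exact le_trans (SimpleGraph.dist_le
      (SimpleGraph.Walk.cons (adj_lr i y) SimpleGraph.Walk.nil))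
      (by simp [SimpleGraph.Walk.length_cons])
  · exact le_trans (SimpleGraph.dist_le
      (SimpleGraph.Walk.cons (adj_rl x j) SimpleGraph.Walk.nil))
      (by simp [SimpleGraph.Walk.length_cons])
  · rcases eq_or_ne x y with rfl | h
    · simp [SimpleGraph.dist_self]
    · exact le_trans (SimpleGraph.dist_le
        (SimpleGraph.Walk.cons (adj_rl x ⟨0, hn⟩)
          (SimpleGraph.Walk.cons (adj_lr ⟨0, hn⟩ y) SimpleGraph.Walk.nil)))
        (by simp [SimpleGraph.Walk.length_cons])

lemma middle (hn : 0 < n) (hm : 0 < m) {u v : Fin n ⊕ Fin m} (p : (KG n m).Walk u v)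
    (hp : p.length = (KG n m).dist u v) {x : Fin m} (hx : inr x ∈ p.support)
    (hxu : (inr x : Fin n ⊕ Fin m) ≠ u) (hxv : (inr x : Fin n ⊕ Fin m) ≠ v) :
    ∃ i j : Fin n, i ≠ j ∧ u = inl i ∧ v = inl j ∧ p.support = [inl i, inr x, inl j] := by
  have hle : p.length ≤ 2 := by rw [hp]; exact dist_le_two hn hm u v
  cases p with
  | nil =>
    simp only [SimpleGraph.Walk.support_nil, List.mem_singleton] at hx
    exact absurd hx hxu
  | cons h q =>
    cases q with
    | nil =>
      simp only [SimpleGraph.Walk.support_cons, SimpleGraph.Walk.support_nil,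
        List.mem_cons, List.mem_singleton] at hx
      rcases hx with hx | hx | hx
      · exact absurd hx hxu
      · exact absurd hx hxv
      · exact absurd hx (by simp)
    | cons h' q2 =>
      cases q2 with
      | nil =>
        rename_i b
        simp only [SimpleGraph.Walk.support_cons, SimpleGraph.Walk.support_nil,
          List.mem_cons, List.mem_singleton] at hx
        have hb : inr x = b := by
          rcases hx with hx | hx | hx | hx
          · exact absurd hx hxu
          · exact hx
          · exact absurd hx hxv
          · exact absurd hx (by simp)
        subst hb
        obtain (i | y) := u
        · obtain (j | z) := v
          · refine ⟨i, j, ?_, rfl, rfl, by simp⟩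
            intro hij
            subst hij
            rw [SimpleGraph.dist_self] at hp
            simp [SimpleGraph.Walk.length_cons] at hp
          · exact absurd h' (not_adj_rr x z)
        · exact absurd h (not_adj_rr y x)
      | cons h'' q3 =>
        simp only [SimpleGraph.Walk.length_cons] at hle
        omega

lemma n_le_choose (hn : 3 ≤ n) : n ≤ n.choose 2 := by
  induction n, hn using Nat.le_induction with
  | base => norm_num
  | succ k hk ih =>
    have h : (k + 1).choose 2 = k + k.choose 2 := by
      rw [Nat.choose_succ_succ, Nat.choose_one_right]
    omega

lemma choose_bound (hn : 3 ≤ n) {a : ℕ} (h : a ≤ n) : n + a.choose 2 ≤ a + n.choose 2 := by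
  rcases Nat.eq_zero_or_pos a with rfl | ha
  · simpa using n_le_choose hn
  · clear hn
    induction n, h using Nat.le_induction with
    | base => omega
    | succ k hk ih =>
      have h : (k + 1).choose 2 = k + k.choose 2 := by
        rw [Nat.choose_succ_succ, Nat.choose_one_right]
      omega

lemma lower_bound (hn : 3 ≤ n) (hm : n.choose 2 < m) {S : Set (Fin n ⊕ Fin m)}
    (hS : IsStrongGeodeticSet (KG n m) S) :
    n + (m - n.choose 2) ≤ S.ncard := by
  classical
  have hn0 : 0 < n := by omega
  have hm0 : 0 < m := by omega
  obtain ⟨P, ⟨hP1, hP2⟩, hcov⟩ := hS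
  set A : Set (Fin n) := {i | inl i ∈ S} with hA
  set B : Set (Fin m) := {x | inr x ∈ S} with hB
  -- split the cardinality of S
  have hsplit : S.ncard = A.ncard + B.ncard := by
    have hSeq : S = inl '' A ∪ inr '' B := by
      ext w
      obtain (i | x) := w <;> simp [hA, hB]
    rw [hSeq, Set.ncard_union_eq (by
        rw [Set.disjoint_left]
        rintro w ⟨i, _, rfl⟩ ⟨x, _, hx⟩
        exact Sum.inl_ne_inr hx.symm) (Set.toFinite _) (Set.toFinite _),
      Set.ncard_image_of_injective _ Sum.inl_injective,
      Set.ncard_image_of_injective _ Sum.inr_injective]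
  -- key structure of geodesics covering uncovered right vertices
  have key : ∀ x : Fin m, inr x ∉ S → ∃ q ∈ P, ∃ i j : Fin n, i ≠ j ∧
      q.1 = inl i ∧ q.2.1 = inl j ∧ q.2.2.support = [inl i, inr x, inl j] := by
    intro x hx
    obtain ⟨q, hq, hmem⟩ := hcov (inr x)
    obtain ⟨hu, hv, _, hlen⟩ := hP1 q hq
    obtain ⟨i, j, hij, h1, h2, h3⟩ := middle hn0 hm0 q.2.2 hlen hmem
      (fun e => hx (e ▸ hu)) (fun e => hx (e ▸ hv))
    exact ⟨q, hq, i, j, hij, h1, h2, h3⟩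
  haveI : Nonempty (Fin n) := ⟨⟨0, hn0⟩⟩
  haveI : Nonempty (Fin n ⊕ Fin m) := ⟨inl ⟨0, hn0⟩⟩
  haveI : Nonempty ((u : Fin n ⊕ Fin m) × (v : Fin n ⊕ Fin m) × (KG n m).Walk u v) :=
    ⟨⟨inl ⟨0, hn0⟩, inl ⟨0, hn0⟩, SimpleGraph.Walk.nil⟩⟩
  choose! q hq i j hij hqi hqj hsupp using key
  -- injection from uncovered right vertices to 2-subsets of A
  have hinj : Set.InjOn (fun x => ({i x, j x} : Finset (Fin n))) {x : Fin m | inr x ∉ S} := by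
    intro x hx x' hx' he
    simp only [Set.mem_setOf_eq] at hx hx'
    have he2 : ({i x, j x} : Finset (Fin n)) = {i x', j x'} := he
    have h1 : i x = i x' ∨ i x = j x' := by
      have : i x ∈ ({i x', j x'} : Finset (Fin n)) := by
        rw [← he2]; simp
      simpa using this
    have h2 : j x = i x' ∨ j x = j x' := by
      have : j x ∈ ({i x', j x'} : Finset (Fin n)) := by
        rw [← he2]; simp
      simpa using this
    have hcase : (i x = i x' ∧ j x = j x') ∨ (i x = j x' ∧ j x = i x') := by
      rcases h1 with e1 | e1 <;> rcases h2 with e2 | e2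
      · exact absurd (e1.trans e2.symm) (hij x hx)
      · exact Or.inl ⟨e1, e2⟩
      · exact Or.inr ⟨e1, e2⟩
      · exact absurd (e1.trans e2.symm) (hij x hx)
    rcases hcase with ⟨e1, e2⟩ | ⟨e1, e2⟩
    · have hqq : q x = q x' := by
        refine ((hP2 (q x) (hq x hx) (q x') (hq x' hx')).1 ⟨?_, ?_⟩)
        · rw [hqi x hx, hqi x' hx', e1]
        · rw [hqj x hx, hqj x' hx', e2]
      have hs1 := hsupp x hx
      have hs2 := hsupp x' hx'
      rw [← hqq] at hs2
      rw [hs1] at hs2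
      simp only [List.cons.injEq] at hs2
      exact Sum.inr_injective hs2.2.1
    · have hrev : (q x).2.2.support = (q x').2.2.support.reverse := by
        refine ((hP2 (q x) (hq x hx) (q x') (hq x' hx')).2 ⟨?_, ?_⟩)
        · rw [hqi x hx, hqj x' hx', e1]
        · rw [hqj x hx, hqi x' hx', e2]
      rw [hsupp x hx, hsupp x' hx'] at hrev
      simp at hrev
      exact hrev.2.1
  have hmaps : ∀ x ∈ {x : Fin m | inr x ∉ S},
      ({i x, j x} : Finset (Fin n)) ∈ ((A.toFinset.powersetCard 2 : Finset (Finset (Fin n))) :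
        Set (Finset (Fin n))) := by
    intro x hx
    simp only [Set.mem_setOf_eq] at hx
    rw [Finset.mem_coe, Finset.mem_powersetCard]
    constructor
    · intro z hz
      simp only [Finset.mem_insert, Finset.mem_singleton] at hz
      rcases hz with rfl | rfl
      · rw [Set.mem_toFinset]
        exact Set.mem_setOf_eq ▸ ((hqi x hx) ▸ (hP1 (q x) (hq x hx)).1)
      · rw [Set.mem_toFinset]
        exact Set.mem_setOf_eq ▸ ((hqj x hx) ▸ (hP1 (q x) (hq x hx)).2.1)
    · exact Finset.card_pair (hij x hx)
  have hcount : {x : Fin m | inr x ∉ S}.ncard ≤ A.ncard.choose 2 := by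
    have := Set.ncard_le_ncard_of_injOn _ hmaps hinj (Set.toFinite _)
    rwa [Set.ncard_coe_finset, Finset.card_powersetCard,
      ← Set.ncard_eq_toFinset_card'] at this
  have hcompl : B.ncard + {x : Fin m | inr x ∉ S}.ncard = m := by
    have := Set.ncard_add_ncard_compl B
    have hBc : Bᶜ = {x : Fin m | inr x ∉ S} := by ext x; simp [hB]
    rw [hBc] at this
    simpa using this
  have hAle : A.ncard ≤ n := by
    have := Set.ncard_le_ncard (Set.subset_univ A) (Set.toFinite _)
    rwa [Set.ncard_univ, Nat.card_eq_fintype_card, Fintype.card_fin] at this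
  have hbd := choose_bound hn hAle
  omega

lemma upper_mem (hn : 3 ≤ n) (hm : n.choose 2 < m) :
    ∃ S : Set (Fin n ⊕ Fin m), S.ncard = n + (m - n.choose 2) ∧
      IsStrongGeodeticSet (KG n m) S := by
  classical
  have hm0 : 0 < m := by omega
  set E : Finset (Finset (Fin n)) := Finset.univ.powersetCard 2 with hE
  have hcardE : Fintype.card {e // e ∈ E} = n.choose 2 := by
    rw [Fintype.card_coe, hE, Finset.card_powersetCard, Finset.card_univ, Fintype.card_fin]
  obtain ⟨g⟩ : Nonempty ({e // e ∈ E} ↪ Fin m) := by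
    apply Function.Embedding.nonempty_of_card_le
    rw [hcardE, Fintype.card_fin]
    omega
  have hpair : ∀ {i j : Fin n}, i ≠ j → ({i, j} : Finset (Fin n)) ∈ E := by
    intro i j hij
    rw [hE, Finset.mem_powersetCard]
    exact ⟨Finset.subset_univ _, Finset.card_pair hij⟩
  set T : Set (Fin m) := Set.range (fun e : {e // e ∈ E} => (g e : Fin m)) with hT
  set S : Set (Fin n ⊕ Fin m) := Set.range inl ∪ inr '' Tᶜ with hS
  have hinlS : ∀ i : Fin n, inl i ∈ S := fun i => Or.inl ⟨i, rfl⟩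
  set P : Set ((u : Fin n ⊕ Fin m) × (v : Fin n ⊕ Fin m) × (KG n m).Walk u v) :=
    {q | (∃ u ∈ S, q = ⟨u, u, SimpleGraph.Walk.nil⟩) ∨
      ∃ i j : Fin n, ∃ (h : i ≠ j), q = ⟨inl i, inl j, wll i j (g ⟨{i, j}, hpair h⟩)⟩} with hP
  refine ⟨S, ?_, P, ⟨?_, ?_⟩, ?_⟩
  · -- cardinality
    have hTcard : T.ncard = n.choose 2 := by
      rw [hT, ← Set.image_univ, Set.ncard_image_of_injective _ g.injective,
        Set.ncard_univ, Nat.card_eq_fintype_card, hcardE]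
    have hTc : Tᶜ.ncard = m - n.choose 2 := by
      have := Set.ncard_add_ncard_compl T
      rw [hTcard, Nat.card_eq_fintype_card, Fintype.card_fin] at this
      omega
    have hdisj : Disjoint (Set.range (inl : Fin n → Fin n ⊕ Fin m)) (inr '' Tᶜ) := by
      rw [Set.disjoint_left]
      rintro w ⟨i, rfl⟩ ⟨x, _, hx⟩
      exact Sum.inl_ne_inr hx.symm
    rw [hS, Set.ncard_union_eq hdisj (Set.toFinite _) (Set.toFinite _),
      ← Set.image_univ, Set.ncard_image_of_injective _ Sum.inl_injective,
      Set.ncard_univ, Nat.card_eq_fintype_card, Fintype.card_fin,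
      Set.ncard_image_of_injective _ Sum.inr_injective, hTc]
  · -- condition 1
    rintro q (⟨u, hu, rfl⟩ | ⟨i, j, h, rfl⟩)
    · exact ⟨hu, hu, SimpleGraph.Walk.IsPath.nil, by simp [SimpleGraph.dist_self]⟩
    · refine ⟨hinlS i, hinlS j, ?_, ?_⟩
      · rw [SimpleGraph.Walk.isPath_def, wll_support]
        simp [h]
      · rw [wll_length, dist_ll hm0 h]
  · -- condition 2
    rintro q (⟨u, hu, rfl⟩ | ⟨i, j, h, rfl⟩) q' (⟨u', hu', rfl⟩ | ⟨i', j', h', rfl⟩)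
    · constructor
      · rintro ⟨e1, -⟩
        simp only at e1
        subst e1
        rfl
      · rintro ⟨e1, -⟩
        simp only at e1
        subst e1
        simp
    · constructor
      · rintro ⟨e1, e2⟩
        simp only at e1 e2
        exact absurd (Sum.inl_injective (e1.symm.trans e2)) h'
      · rintro ⟨e1, e2⟩
        simp only at e1 e2
        exact absurd (Sum.inl_injective (e2.symm.trans e1)) h'
    · constructor
      · rintro ⟨e1, e2⟩
        simp only at e1 e2
        exact absurd (Sum.inl_injective (e1.trans e2.symm)) h
      · rintro ⟨e1, e2⟩
        simp only at e1 e2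
        exact absurd (Sum.inl_injective (e1.trans e2.symm)) h
    · constructor
      · rintro ⟨e1, e2⟩
        simp only at e1 e2
        obtain rfl : i = i' := Sum.inl_injective e1
        obtain rfl : j = j' := Sum.inl_injective e2
        rfl
      · rintro ⟨e1, e2⟩
        simp only at e1 e2
        obtain rfl : i = j' := Sum.inl_injective e1
        obtain rfl : j = i' := Sum.inl_injective e2
        have hpe : (⟨{i, j}, hpair h⟩ : {e // e ∈ E}) = ⟨{j, i}, hpair h'⟩ :=
          Subtype.ext (Finset.pair_comm i j)
        rw [wll_support, wll_support, hpe]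
        simp
  · -- coverage
    intro w
    obtain (i | x) := w
    · exact ⟨⟨inl i, inl i, SimpleGraph.Walk.nil⟩, Or.inl ⟨inl i, hinlS i, rfl⟩, by simp⟩
    · by_cases hxT : x ∈ T
      · obtain ⟨e, rfl⟩ := hxT
        have hecard : e.1.card = 2 := (Finset.mem_powersetCard.mp e.2).2
        have hne : e.1.Nonempty := Finset.card_pos.mp (by omega)
        have hlt : e.1.min' hne < e.1.max' hne :=
          Finset.min'_lt_max'_of_card (s := e.1) (by omega)
        have heq : ({e.1.min' hne, e.1.max' hne} : Finset (Fin n)) = e.1 := by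
          apply Finset.eq_of_subset_of_card_le
          · exact Finset.insert_subset (e.1.min'_mem hne)
              (Finset.singleton_subset_iff.mpr (e.1.max'_mem hne))
          · rw [Finset.card_pair hlt.ne]
            omega
        have hee : (⟨{e.1.min' hne, e.1.max' hne}, hpair hlt.ne⟩ : {e // e ∈ E}) = e :=
          Subtype.ext heq
        refine ⟨⟨inl (e.1.min' hne), inl (e.1.max' hne),
          wll _ _ (g ⟨{e.1.min' hne, e.1.max' hne}, hpair hlt.ne⟩)⟩,
          Or.inr ⟨_, _, hlt.ne, rfl⟩, ?_⟩
        rw [wll_support, hee]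
        simp
      · have hxS : inr x ∈ S := Or.inr ⟨x, hxT, rfl⟩
        exact ⟨⟨inr x, inr x, SimpleGraph.Walk.nil⟩, Or.inl ⟨inr x, hxS, rfl⟩, by simp⟩

end SGAux

theorem sg_of_m_large (n m : ℕ) (hn : 3 ≤ n) (hm : n.choose 2 < m) :
    strongGeodeticNumber (completeBipartiteGraph (Fin n) (Fin m)) =
      m + 1 - (n - 1).choose 2 := by
  obtain ⟨S, hScard, hSgeo⟩ := SGAux.upper_mem hn hm
  have hub : strongGeodeticNumber (completeBipartiteGraph (Fin n) (Fin m)) ≤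
      n + (m - n.choose 2) := by
    unfold strongGeodeticNumber
    exact Nat.sInf_le (Set.mem_setOf_eq ▸ ⟨S, hScard, hSgeo⟩)
  have hlb : n + (m - n.choose 2) ≤
      strongGeodeticNumber (completeBipartiteGraph (Fin n) (Fin m)) := by
    unfold strongGeodeticNumber
    apply le_csInf ⟨n + (m - n.choose 2), Set.mem_setOf_eq ▸ ⟨S, hScard, hSgeo⟩⟩
    rintro k ⟨S', rfl, hS'⟩
    exact SGAux.lower_bound hn hm hS'
  have h1 : n.choose 2 = (n - 1).choose 2 + (n - 1) := by
    obtain ⟨k, rfl⟩ : ∃ k, n = k + 1 := ⟨n - 1, by omega⟩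
    rw [Nat.choose_succ_succ, Nat.choose_one_right]
    simp
    omega
  omega
end

section
/- If 1 ≤ n ≤ 3 and m > n, then sg(K_{n,m}) = m. -/
/-!
Geodesics of `K_{n,m}` have length at most 2. With `b₀` on the `m`-side, the paths
`b₀ – a – j` (`j ≠ b₀`), where `a` runs over the whole `n`-side, cover every vertex as soon as
`m - 1 ≥ n`, so the `m`-side is a strong geodetic set. Conversely, an `m`-side vertex outside `S`
can only be covered as the middle vertex of the fixed geodesic between two distinct `n`-side
vertices of `S`, and each such pair carries one fixed geodesic. So if `S` has `a` vertices on
the `n`-side, at most `C(a, 2)` vertices of the `m`-side are missing from `S`, and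
`C(a, 2) ≤ a` exactly because `a ≤ 3`.
-/

open SimpleGraph Finset

lemma SimpleGraph.Walk.support_eq_of_length_le_two {V : Type*} {G : SimpleGraph V}
    {u v w : V} (p : G.Walk u v) (hp : p.length ≤ 2) (hw : w ∈ p.support)
    (hwu : w ≠ u) (hwv : w ≠ v) :
    G.Adj u w ∧ G.Adj w v ∧ p.support = [u, w, v] := by
  match p with
  | .nil => simp_all
  | .cons _ .nil => simp_all
  | .cons (v := x) h (.cons h' .nil) =>
    obtain rfl : w = x := by simp_all
    exact ⟨h, h', rfl⟩
  | .cons _ (.cons _ (.cons _ _)) => simp at hp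

lemma IsGeodesicSelection.middle_eq_of_endpoints_eq {V : Type*} {G : SimpleGraph V} {S : Set V}
    {P : Set ((u : V) × (v : V) × G.Walk u v)} (hP : IsGeodesicSelection G S P)
    {q q' : (u : V) × (v : V) × G.Walk u v} (hq : q ∈ P) (hq' : q' ∈ P) {w w' : V}
    (hqw : q.2.2.support = [q.1, w, q.2.1]) (hqw' : q'.2.2.support = [q'.1, w', q'.2.1])
    (hends : s(q.1, q.2.1) = s(q'.1, q'.2.1)) : w = w' := by
  rcases Sym2.eq_iff.mp hends with hsame | hswap
  · obtain rfl := (hP.2 q hq q' hq').1 hsame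
    simp_all
  · have := (hP.2 q hq q' hq').2 hswap
    simp_all

section completeBipartiteGraph

variable {α β : Type*}

namespace completeBipartiteGraph

def inrWalk (a : α) (i j : β) : (completeBipartiteGraph α β).Walk (.inr i) (.inr j) :=
  .cons (v := .inl a) (by simp) (.cons (by simp) .nil)

def inlWalk (i : β) (a b : α) : (completeBipartiteGraph α β).Walk (.inl a) (.inl b) :=
  .cons (v := .inr i) (by simp) (.cons (by simp) .nil)

lemma inrWalk_isPath (a : α) {i j : β} (hij : i ≠ j) : (inrWalk a i j).IsPath := by
  simp [Walk.isPath_def, inrWalk, hij]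

lemma inrWalk_length_eq_dist (a : α) {i j : β} (hij : i ≠ j) :
    (inrWalk a i j).length = (completeBipartiteGraph α β).dist (.inr i) (.inr j) := by
  have hr : (completeBipartiteGraph α β).Reachable (.inr i) (.inr j) := ⟨inrWalk a i j⟩
  have := hr.one_lt_dist_of_ne_of_not_adj (by simpa) (by simp)
  have := dist_le (inrWalk a i j)
  simp only [inrWalk, Walk.length_cons, Walk.length_nil] at this ⊢
  omega

end completeBipartiteGraph

lemma completeBipartiteGraph_dist_le_two [Nonempty α] [Nonempty β] (u v : α ⊕ β) :
    (completeBipartiteGraph α β).dist u v ≤ 2 := by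
  obtain ⟨a⟩ := ‹Nonempty α›
  obtain ⟨i⟩ := ‹Nonempty β›
  rcases u with a₁ | i₁ <;> rcases v with a₂ | i₂
  · exact dist_le (completeBipartiteGraph.inlWalk i a₁ a₂)
  · exact (dist_le (Adj.toWalk (by simp))).trans (by simp)
  · exact (dist_le (Adj.toWalk (by simp))).trans (by simp)
  · exact dist_le (completeBipartiteGraph.inrWalk a i₁ i₂)

lemma isStrongGeodeticSet_range_inr_of_surjOn [Nonempty α] {b₀ : β} {f : β → α}
    (hf : Set.SurjOn f {b₀}ᶜ Set.univ) :
    IsStrongGeodeticSet (completeBipartiteGraph α β) (Set.range Sum.inr) := by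
  open completeBipartiteGraph in
  refine ⟨{q | ∃ j ≠ b₀, q = ⟨.inr b₀, .inr j, inrWalk (f j) b₀ j⟩}, ⟨?_, ?_⟩, ?_⟩
  · rintro _ ⟨j, hj, rfl⟩
    exact ⟨⟨b₀, rfl⟩, ⟨j, rfl⟩, inrWalk_isPath _ (Ne.symm hj),
      inrWalk_length_eq_dist _ (Ne.symm hj)⟩
  · rintro _ ⟨j, hj, rfl⟩ _ ⟨j', hj', rfl⟩
    refine ⟨fun ⟨_, h⟩ => ?_, fun ⟨h, _⟩ => absurd (Sum.inr_injective h) (Ne.symm hj')⟩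
    obtain rfl := Sum.inr_injective h
    rfl
  · obtain ⟨j₁, hj₁, -⟩ := hf (Set.mem_univ (Classical.arbitrary α))
    rintro (a | j)
    · obtain ⟨j, hj, rfl⟩ := hf (Set.mem_univ a)
      exact ⟨_, ⟨j, hj, rfl⟩, by simp [inrWalk]⟩
    · by_cases hj : j = b₀
      · exact ⟨_, ⟨j₁, hj₁, rfl⟩, by simp [inrWalk, hj]⟩
      · exact ⟨_, ⟨j, hj, rfl⟩, by simp [inrWalk]⟩

lemma exists_surjOn_compl_singleton_of_card_lt [Fintype α] [Fintype β] [Nonempty α]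
    (h : Fintype.card α < Fintype.card β) (b₀ : β) :
    ∃ f : β → α, Set.SurjOn f {b₀}ᶜ Set.univ := by
  classical
  obtain ⟨e⟩ : Nonempty (α ↪ {j // j ≠ b₀}) :=
    Function.Embedding.nonempty_of_card_le (by simp [Fintype.card_subtype_compl]; omega)
  have he : Function.Injective (fun a => (e a : β)) := Subtype.val_injective.comp e.injective
  exact ⟨Function.invFun (fun a => (e a : β)),
    fun a _ => ⟨e a, (e a).2, Function.leftInverse_invFun he a⟩⟩

lemma isStrongGeodeticSet_range_inr [Fintype α] [Fintype β] [Nonempty α]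
    (h : Fintype.card α < Fintype.card β) :
    IsStrongGeodeticSet (completeBipartiteGraph α β) (Set.range Sum.inr) := by
  obtain ⟨b₀⟩ : Nonempty β := Fintype.card_pos_iff.mp (by omega)
  obtain ⟨f, hf⟩ := exists_surjOn_compl_singleton_of_card_lt h b₀
  exact isStrongGeodeticSet_range_inr_of_surjOn hf

lemma IsGeodesicSelection.exists_inl_of_inr_mem_support [Nonempty α]
    {S : Set (α ⊕ β)}
    {P : Set ((u : α ⊕ β) × (v : α ⊕ β) × (completeBipartiteGraph α β).Walk u v)}
    (hP : IsGeodesicSelection (completeBipartiteGraph α β) S P)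
    {q : (u : α ⊕ β) × (v : α ⊕ β) × (completeBipartiteGraph α β).Walk u v} (hq : q ∈ P)
    {j : β} (hj : .inr j ∈ q.2.2.support) (hjS : .inr j ∉ S) :
    ∃ a b, .inl a ∈ S ∧ .inl b ∈ S ∧ a ≠ b ∧ q.1 = .inl a ∧ q.2.1 = .inl b ∧
      q.2.2.support = [q.1, .inr j, q.2.1] := by
  have : Nonempty β := ⟨j⟩
  obtain ⟨u, v, p⟩ := q
  obtain ⟨hu, hv, hp, hlen⟩ := hP.1 _ hq
  obtain ⟨hadj, hadj', hsupp⟩ := p.support_eq_of_length_le_two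
    (hlen ▸ completeBipartiteGraph_dist_le_two u v) hj (by rintro rfl; exact hjS hu)
    (by rintro rfl; exact hjS hv)
  obtain ⟨a, rfl⟩ : ∃ a, u = .inl a := Sum.isLeft_iff.mp (by simpa using hadj)
  obtain ⟨b, rfl⟩ : ∃ b, v = .inl b := Sum.isLeft_iff.mp (by simpa using hadj')
  refine ⟨a, b, hu, hv, ?_, rfl, rfl, hsupp⟩
  rintro rfl
  simpa [hsupp] using hp.support_nodup

lemma card_filter_inr_notMem_le_choose [Nonempty α] [Fintype β] [DecidableEq α]
    [DecidableEq β] (u : Finset (α ⊕ β))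
    (hu : IsStrongGeodeticSet (completeBipartiteGraph α β) u) :
    #{j | Sum.inr j ∉ u} ≤ (#u.toLeft).choose 2 := by
  obtain ⟨P, hP, hcov⟩ := hu
  rw [← Sym2.card_image_offDiag]
  refine card_le_card_of_forall_subsingleton (fun j z => ∃ q ∈ P,
    q.2.2.support = [q.1, .inr j, q.2.1] ∧ z.map Sum.inl = s(q.1, q.2.1)) ?_ ?_
  · intro j hj
    obtain ⟨q, hq, hjq⟩ := hcov (.inr j)
    obtain ⟨a, b, ha, hb, hab, h₁, h₂, hsupp⟩ :=
      hP.exists_inl_of_inr_mem_support hq hjq (by simpa using hj)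
    exact ⟨s(a, b), mem_image.2 ⟨(a, b), by simp_all, rfl⟩, q, hq, hsupp, by simp [h₁, h₂]⟩
  · rintro z - j ⟨-, q, hq, hqj, hqz⟩ j' ⟨-, q', hq', hqj', hqz'⟩
    exact Sum.inr_injective (hP.middle_eq_of_endpoints_eq hq hq' hqj hqj' (hqz.symm.trans hqz'))

lemma card_le_ncard_of_isStrongGeodeticSet [Fintype α] [Fintype β] [Nonempty α]
    (h3 : Fintype.card α ≤ 3) {S : Set (α ⊕ β)}
    (hS : IsStrongGeodeticSet (completeBipartiteGraph α β) S) :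
    Fintype.card β ≤ S.ncard := by
  classical
  obtain ⟨u, rfl⟩ := (Set.toFinite S).exists_finset_coe
  have hright : #u.toRight + #{j | Sum.inr j ∉ u} = Fintype.card β := by
    rw [show u.toRight = ({j | Sum.inr j ∈ u} : Finset β) by ext; simp]
    exact card_filter_add_card_filter_not _
  have hleft : (#u.toLeft).choose 2 ≤ #u.toLeft := by
    have : #u.toLeft ≤ 3 := card_le_univ _ |>.trans h3
    interval_cases #u.toLeft <;> decide
  have := card_filter_inr_notMem_le_choose u hS
  rw [Set.ncard_coe_finset, ← card_toLeft_add_card_toRight]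
  omega

theorem strongGeodeticNumber_completeBipartiteGraph [Fintype α] [Fintype β] [Nonempty α]
    (h3 : Fintype.card α ≤ 3) (h : Fintype.card α < Fintype.card β) :
    strongGeodeticNumber (completeBipartiteGraph α β) = Fintype.card β := by
  have hcard : (Set.range (Sum.inr : β → α ⊕ β)).ncard = Fintype.card β := by
    rw [Set.ncard_range_of_injective Sum.inr_injective, Nat.card_eq_fintype_card]
  refine IsLeast.csInf_eq ⟨⟨_, hcard, isStrongGeodeticSet_range_inr h⟩, ?_⟩
  rintro _ ⟨S, rfl, hS⟩
  exact card_le_ncard_of_isStrongGeodeticSet h3 hS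

end completeBipartiteGraph

theorem sg_of_small_n (n m : ℕ) (hn1 : 1 ≤ n) (hn3 : n ≤ 3) (hm : n < m) :
    strongGeodeticNumber (completeBipartiteGraph (Fin n) (Fin m)) = m := by
  have : Nonempty (Fin n) := ⟨⟨0, hn1⟩⟩
  simpa using strongGeodeticNumber_completeBipartiteGraph (α := Fin n) (β := Fin m)
    (by simpa) (by simpa)
end

section
/- For integers k ≥ 3 and 3 ≤ n < k, if m = k − 1 + C(n−1,2), then sg(K_{n,m}) = k, and an optimal strong geodetic set consists of all n vertices of the part of size n together with k − n vertices of the part of size m. -/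
open SimpleGraph Sum

section Dist
variable {n m : ℕ}

private lemma kb_adj_lr (i : Fin n) (j : Fin m) :
    (completeBipartiteGraph (Fin n) (Fin m)).Adj (inl i) (inr j) := by simp

private lemma kb_dist_lr (i : Fin n) (j : Fin m) :
    (completeBipartiteGraph (Fin n) (Fin m)).dist (inl i) (inr j) = 1 :=
  SimpleGraph.dist_eq_one_iff_adj.mpr (kb_adj_lr i j)

private lemma kb_dist_ll (hm : 0 < m) {i i' : Fin n} (h : i ≠ i') :
    (completeBipartiteGraph (Fin n) (Fin m)).dist (inl i) (inl i') = 2 := by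
  have j0 : Fin m := ⟨0, hm⟩
  let w : (completeBipartiteGraph (Fin n) (Fin m)).Walk (inl i) (inl i') :=
    Walk.cons (kb_adj_lr i j0) (Walk.cons ((kb_adj_lr i' j0).symm) Walk.nil)
  have hle : (completeBipartiteGraph (Fin n) (Fin m)).dist (inl i) (inl i') ≤ 2 := by
    simpa [w] using SimpleGraph.dist_le w
  have hne : (completeBipartiteGraph (Fin n) (Fin m)).dist (inl i) (inl i') ≠ 1 := by
    intro hd
    have := SimpleGraph.dist_eq_one_iff_adj.mp hd
    simp at this
  have h0 : (completeBipartiteGraph (Fin n) (Fin m)).dist (inl i) (inl i') ≠ 0 := by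
    intro hd
    rw [SimpleGraph.dist_eq_zero_iff_eq_or_not_reachable] at hd
    rcases hd with hd | hd
    · exact h (by simpa using hd)
    · exact hd w.reachable
  omega

private lemma kb_dist_rr (hn : 0 < n) {j j' : Fin m} (h : j ≠ j') :
    (completeBipartiteGraph (Fin n) (Fin m)).dist (inr j) (inr j') = 2 := by
  have i0 : Fin n := ⟨0, hn⟩
  let w : (completeBipartiteGraph (Fin n) (Fin m)).Walk (inr j) (inr j') :=
    Walk.cons (kb_adj_lr i0 j).symm (Walk.cons (kb_adj_lr i0 j') Walk.nil)
  have hle : (completeBipartiteGraph (Fin n) (Fin m)).dist (inr j) (inr j') ≤ 2 := by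
    simpa [w] using SimpleGraph.dist_le w
  have hne : (completeBipartiteGraph (Fin n) (Fin m)).dist (inr j) (inr j') ≠ 1 := by
    intro hd
    have := SimpleGraph.dist_eq_one_iff_adj.mp hd
    simp at this
  have h0 : (completeBipartiteGraph (Fin n) (Fin m)).dist (inr j) (inr j') ≠ 0 := by
    intro hd
    rw [SimpleGraph.dist_eq_zero_iff_eq_or_not_reachable] at hd
    rcases hd with hd | hd
    · exact h (by simpa using hd)
    · exact hd w.reachable
  omega

end Dist

section Mid

private lemma walk_support_three {V : Type*} {G : SimpleGraph V} {u v : V} (p : G.Walk u v)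
    (h2 : p.length ≤ 2) {w : V} (hw : w ∈ p.support) (hwu : w ≠ u) (hwv : w ≠ v) :
    p.support = [u, w, v] ∧ G.Adj u w ∧ G.Adj w v := by
  cases p with
  | nil => simp at hw; exact absurd hw hwu
  | cons h q =>
    cases q with
    | nil =>
      simp at hw
      rcases hw with hw | hw
      · exact absurd hw hwu
      · exact absurd hw hwv
    | cons h' q' =>
      cases q' with
      | nil =>
        simp at hw
        rcases hw with hw | hw | hw
        · exact absurd hw hwu
        · subst hw; exact ⟨by simp, h, h'⟩
        · exact absurd hw hwv
      | cons h'' q'' => simp at h2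

end Mid

section Count
variable {n m : ℕ}

private lemma kb_dist_le_two (hn : 0 < n) (hm : 0 < m) (u v : Fin n ⊕ Fin m) :
    (completeBipartiteGraph (Fin n) (Fin m)).dist u v ≤ 2 := by
  cases u with
  | inl i =>
    cases v with
    | inl i' =>
      by_cases h : i = i'
      · subst h; rw [SimpleGraph.dist_self]; omega
      · rw [kb_dist_ll hm h]
    | inr j => rw [kb_dist_lr]; omega
  | inr j =>
    cases v with
    | inl i =>
      rw [SimpleGraph.dist_comm, kb_dist_lr]; omega
    | inr j' =>
      by_cases h : j = j'
      · subst h; rw [SimpleGraph.dist_self]; omega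
      · rw [kb_dist_rr hn h]

/-- Every vertex not in `S` that is covered must be the midpoint of a selected geodesic. -/
private lemma mid_extract {S : Set (Fin n ⊕ Fin m)}
    {P : Set ((u : Fin n ⊕ Fin m) × (v : Fin n ⊕ Fin m) ×
      (completeBipartiteGraph (Fin n) (Fin m)).Walk u v)}
    (hn : 0 < n) (hm : 0 < m)
    (hsel : IsGeodesicSelection (completeBipartiteGraph (Fin n) (Fin m)) S P)
    {w : Fin n ⊕ Fin m} (hwS : w ∉ S) {q : (u : Fin n ⊕ Fin m) × (v : Fin n ⊕ Fin m) ×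
      (completeBipartiteGraph (Fin n) (Fin m)).Walk u v} (hq : q ∈ P)
    (hw : w ∈ q.2.2.support) :
    q.2.2.support = [q.1, w, q.2.1] ∧
      (completeBipartiteGraph (Fin n) (Fin m)).Adj q.1 w ∧
      (completeBipartiteGraph (Fin n) (Fin m)).Adj w q.2.1 ∧ q.1 ≠ q.2.1 := by
  obtain ⟨hu, hv, _, hlen⟩ := hsel.1 q hq
  have h2 : q.2.2.length ≤ 2 := hlen ▸ kb_dist_le_two hn hm _ _
  have hwu : w ≠ q.1 := fun h => hwS (h ▸ hu)
  have hwv : w ≠ q.2.1 := fun h => hwS (h ▸ hv)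
  obtain ⟨hsup, ha1, ha2⟩ := walk_support_three q.2.2 h2 hw hwu hwv
  refine ⟨hsup, ha1, ha2, ?_⟩
  intro he
  have h0 : q.2.2.length = 2 := by
    have := congrArg List.length hsup
    rw [SimpleGraph.Walk.length_support] at this
    simpa using this
  rw [h0] at hlen
  rw [← he, SimpleGraph.dist_self] at hlen
  simp at hlen

end Count

section Count2
variable {n m : ℕ}

private lemma count_inr {S : Set (Fin n ⊕ Fin m)}
    {P : Set ((u : Fin n ⊕ Fin m) × (v : Fin n ⊕ Fin m) ×
      (completeBipartiteGraph (Fin n) (Fin m)).Walk u v)}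
    (hn : 0 < n) (hm : 0 < m)
    (hsel : IsGeodesicSelection (completeBipartiteGraph (Fin n) (Fin m)) S P)
    (hcov : ∀ w, ∃ q ∈ P, w ∈ q.2.2.support) :
    {j : Fin m | inr j ∉ S}.ncard ≤ ({i : Fin n | inl i ∈ S}.ncard).choose 2 := by
  classical
  have key : ∀ j : Fin m, inr j ∉ S → ∃ q ∈ P, ∃ u₁ v₁ : Fin n, u₁ ≠ v₁ ∧
      q.1 = inl u₁ ∧ q.2.1 = inl v₁ ∧
      q.2.2.support = [inl u₁, (inr j : Fin n ⊕ Fin m), inl v₁] := by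
    intro j hj
    obtain ⟨q, hq, hw⟩ := hcov (inr j)
    obtain ⟨hsup, ha1, ha2, hne⟩ := mid_extract hn hm hsel hj hq hw
    obtain ⟨u₁, hu1⟩ : ∃ u₁, q.1 = inl u₁ := by
      rcases hq1 : q.1 with u₁ | j₁
      · exact ⟨u₁, rfl⟩
      · rw [hq1] at ha1; simp at ha1
    obtain ⟨v₁, hv1⟩ : ∃ v₁, q.2.1 = inl v₁ := by
      rcases hq1 : q.2.1 with v₁ | j₁
      · exact ⟨v₁, rfl⟩
      · rw [hq1] at ha2; simp at ha2
    refine ⟨q, hq, u₁, v₁, ?_, hu1, hv1, ?_⟩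
    · exact fun h => hne ((hu1.trans (congrArg inl h)).trans hv1.symm)
    · rw [← hu1, ← hv1]; exact hsup
  choose q hqP u₁ v₁ hne hq1 hq2 hsup using key
  set A : Finset (Fin n) := {i : Fin n | inl i ∈ S}.toFinset with hA
  have hcard : ({i : Fin n | inl i ∈ S}).ncard = A.card := Set.ncard_eq_toFinset_card' _
  rw [hcard, ← Finset.card_powersetCard, ← Set.ncard_coe_finset]
  apply Set.ncard_le_ncard_of_injOn
    (fun j => if h : inr j ∉ S then ({u₁ j h, v₁ j h} : Finset (Fin n)) else ∅)
  · intro j hj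
    simp only [Set.mem_setOf_eq] at hj
    simp only [dif_pos hj, Finset.mem_coe, Finset.mem_powersetCard]
    constructor
    · intro x hx
      obtain ⟨hu, hv, -, -⟩ := hsel.1 (q j hj) (hqP j hj)
      rw [hq1 j hj] at hu; rw [hq2 j hj] at hv
      simp only [Finset.mem_insert, Finset.mem_singleton] at hx
      rcases hx with rfl | rfl <;> simp [hA, hu, hv]
    · exact Finset.card_pair (hne j hj)
  · intro j hj j' hj' heq
    simp only [Set.mem_setOf_eq] at hj hj'
    simp only [dif_pos hj, dif_pos hj'] at heq
    have h1 : u₁ j hj = u₁ j' hj' ∨ u₁ j hj = v₁ j' hj' := by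
      have : u₁ j hj ∈ ({u₁ j' hj', v₁ j' hj'} : Finset (Fin n)) := by
        rw [← heq]; simp
      simpa using this
    have h2 : v₁ j hj = u₁ j' hj' ∨ v₁ j hj = v₁ j' hj' := by
      have : v₁ j hj ∈ ({u₁ j' hj', v₁ j' hj'} : Finset (Fin n)) := by
        rw [← heq]; simp
      simpa using this
    rcases h1 with h1 | h1
    · have h2' : v₁ j hj = v₁ j' hj' := by
        rcases h2 with h2 | h2
        · exact absurd (h2.trans h1.symm) (Ne.symm (hne j hj))
        · exact h2
      have hqq : q j hj = q j' hj' := by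
        refine ((hsel.2 (q j hj) (hqP j hj) (q j' hj') (hqP j' hj')).1) ⟨?_, ?_⟩
        · rw [hq1 j hj, hq1 j' hj', h1]
        · rw [hq2 j hj, hq2 j' hj', h2']
      have hss := congrArg (fun r : (u : Fin n ⊕ Fin m) × (v : Fin n ⊕ Fin m) ×
        (completeBipartiteGraph (Fin n) (Fin m)).Walk u v => r.2.2.support) hqq
      rw [hsup j hj, hsup j' hj'] at hss
      simp only [List.cons.injEq] at hss
      exact inr_injective hss.2.1
    · have h2' : v₁ j hj = u₁ j' hj' := by
        rcases h2 with h2 | h2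
        · exact h2
        · exact absurd (h2.trans h1.symm) (Ne.symm (hne j hj))
      have hrev := ((hsel.2 (q j hj) (hqP j hj) (q j' hj') (hqP j' hj')).2) ⟨?_, ?_⟩
      · rw [hsup j hj, hsup j' hj'] at hrev
        simp only [List.reverse_cons, List.reverse_nil, List.nil_append, List.cons_append,
          List.cons.injEq] at hrev
        exact inr_injective hrev.2.1
      · rw [hq1 j hj, hq2 j' hj', h1]
      · rw [hq2 j hj, hq1 j' hj', h2']

end Count2

section Count3
variable {n m : ℕ}

private lemma count_inl {S : Set (Fin n ⊕ Fin m)}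
    {P : Set ((u : Fin n ⊕ Fin m) × (v : Fin n ⊕ Fin m) ×
      (completeBipartiteGraph (Fin n) (Fin m)).Walk u v)}
    (hn : 0 < n) (hm : 0 < m)
    (hsel : IsGeodesicSelection (completeBipartiteGraph (Fin n) (Fin m)) S P)
    (hcov : ∀ w, ∃ q ∈ P, w ∈ q.2.2.support) :
    {i : Fin n | inl i ∉ S}.ncard ≤ ({j : Fin m | inr j ∈ S}.ncard).choose 2 := by
  classical
  have key : ∀ i : Fin n, inl i ∉ S → ∃ q ∈ P, ∃ u₁ v₁ : Fin m, u₁ ≠ v₁ ∧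
      q.1 = inr u₁ ∧ q.2.1 = inr v₁ ∧
      q.2.2.support = [inr u₁, (inl i : Fin n ⊕ Fin m), inr v₁] := by
    intro i hi
    obtain ⟨q, hq, hw⟩ := hcov (inl i)
    obtain ⟨hsup, ha1, ha2, hne⟩ := mid_extract hn hm hsel hi hq hw
    obtain ⟨u₁, hu1⟩ : ∃ u₁, q.1 = inr u₁ := by
      rcases hq1 : q.1 with i₁ | u₁
      · rw [hq1] at ha1; simp at ha1
      · exact ⟨u₁, rfl⟩
    obtain ⟨v₁, hv1⟩ : ∃ v₁, q.2.1 = inr v₁ := by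
      rcases hq1 : q.2.1 with i₁ | v₁
      · rw [hq1] at ha2; simp at ha2
      · exact ⟨v₁, rfl⟩
    refine ⟨q, hq, u₁, v₁, ?_, hu1, hv1, ?_⟩
    · exact fun h => hne ((hu1.trans (congrArg inr h)).trans hv1.symm)
    · rw [← hu1, ← hv1]; exact hsup
  choose q hqP u₁ v₁ hne hq1 hq2 hsup using key
  set A : Finset (Fin m) := {j : Fin m | inr j ∈ S}.toFinset with hA
  have hcard : ({j : Fin m | inr j ∈ S}).ncard = A.card := Set.ncard_eq_toFinset_card' _
  rw [hcard, ← Finset.card_powersetCard, ← Set.ncard_coe_finset]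
  apply Set.ncard_le_ncard_of_injOn
    (fun i => if h : inl i ∉ S then ({u₁ i h, v₁ i h} : Finset (Fin m)) else ∅)
  · intro i hi
    simp only [Set.mem_setOf_eq] at hi
    simp only [dif_pos hi, Finset.mem_coe, Finset.mem_powersetCard]
    constructor
    · intro x hx
      obtain ⟨hu, hv, -, -⟩ := hsel.1 (q i hi) (hqP i hi)
      rw [hq1 i hi] at hu; rw [hq2 i hi] at hv
      simp only [Finset.mem_insert, Finset.mem_singleton] at hx
      rcases hx with rfl | rfl <;> simp [hA, hu, hv]
    · exact Finset.card_pair (hne i hi)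
  · intro i hi i' hi' heq
    simp only [Set.mem_setOf_eq] at hi hi'
    simp only [dif_pos hi, dif_pos hi'] at heq
    have h1 : u₁ i hi = u₁ i' hi' ∨ u₁ i hi = v₁ i' hi' := by
      have : u₁ i hi ∈ ({u₁ i' hi', v₁ i' hi'} : Finset (Fin m)) := by
        rw [← heq]; simp
      simpa using this
    have h2 : v₁ i hi = u₁ i' hi' ∨ v₁ i hi = v₁ i' hi' := by
      have : v₁ i hi ∈ ({u₁ i' hi', v₁ i' hi'} : Finset (Fin m)) := by
        rw [← heq]; simp
      simpa using this
    rcases h1 with h1 | h1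
    · have h2' : v₁ i hi = v₁ i' hi' := by
        rcases h2 with h2 | h2
        · exact absurd (h2.trans h1.symm) (Ne.symm (hne i hi))
        · exact h2
      have hqq : q i hi = q i' hi' := by
        refine ((hsel.2 (q i hi) (hqP i hi) (q i' hi') (hqP i' hi')).1) ⟨?_, ?_⟩
        · rw [hq1 i hi, hq1 i' hi', h1]
        · rw [hq2 i hi, hq2 i' hi', h2']
      have hss := congrArg (fun r : (u : Fin n ⊕ Fin m) × (v : Fin n ⊕ Fin m) ×
        (completeBipartiteGraph (Fin n) (Fin m)).Walk u v => r.2.2.support) hqq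
      rw [hsup i hi, hsup i' hi'] at hss
      simp only [List.cons.injEq] at hss
      exact inl_injective hss.2.1
    · have h2' : v₁ i hi = u₁ i' hi' := by
        rcases h2 with h2 | h2
        · exact h2
        · exact absurd (h2.trans h1.symm) (Ne.symm (hne i hi))
      have hrev := ((hsel.2 (q i hi) (hqP i hi) (q i' hi') (hqP i' hi')).2) ⟨?_, ?_⟩
      · rw [hsup i hi, hsup i' hi'] at hrev
        simp only [List.reverse_cons, List.reverse_nil, List.nil_append, List.cons_append,
          List.cons.injEq] at hrev
        exact inl_injective hrev.2.1
      · rw [hq1 i hi, hq2 i' hi', h1]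
      · rw [hq2 i hi, hq1 i' hi', h2']

end Count3

section Lower
variable {k n m : ℕ}

private lemma arith {a b : ℕ} (hn : 3 ≤ n) (hnk : n < k)
    (hm : m = k - 1 + (n - 1).choose 2) (ha : a ≤ n)
    (h1 : m ≤ b + a.choose 2) (h2 : n ≤ a + b.choose 2) : k ≤ a + b := by
  have hc : n.choose 2 = (n - 1).choose 2 + (n - 1) := by
    obtain ⟨n', rfl⟩ : ∃ n', n = n' + 1 := ⟨n - 1, by omega⟩
    rw [Nat.choose_succ_succ, Nat.choose_one_right]
    simp [Nat.add_comm]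
  by_cases hae : a = n
  · subst hae
    omega
  · have hlt : a ≤ n - 1 := by omega
    have hle : a.choose 2 ≤ (n - 1).choose 2 := Nat.choose_le_choose 2 hlt
    by_cases ha0 : a = 0
    · subst ha0
      have h3 : 1 ≤ (n - 1).choose 2 := by
        calc 1 = Nat.choose 2 2 := by norm_num
        _ ≤ (n - 1).choose 2 := Nat.choose_le_choose 2 (by omega)
      simp [Nat.choose] at h1
      omega
    · omega

private lemma lowerbound (hn : 3 ≤ n) (hnk : n < k)
    (hm : m = k - 1 + (n - 1).choose 2) {S : Set (Fin n ⊕ Fin m)}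
    (hS : IsStrongGeodeticSet (completeBipartiteGraph (Fin n) (Fin m)) S) :
    k ≤ S.ncard := by
  classical
  obtain ⟨P, hsel, hcov⟩ := hS
  have hn0 : 0 < n := by omega
  have hm0 : 0 < m := by omega
  have h1 := count_inr hn0 hm0 hsel hcov
  have h2 := count_inl hn0 hm0 hsel hcov
  set a := {i : Fin n | inl i ∈ S}.ncard with hadef
  set b := {j : Fin m | inr j ∈ S}.ncard with hbdef
  have hca : {i : Fin n | inl i ∉ S}.ncard = n - a := by
    have hcompl : {i : Fin n | inl i ∉ S} = {i : Fin n | inl i ∈ S}ᶜ := by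
      ext i; simp
    have := Set.ncard_add_ncard_compl {i : Fin n | inl i ∈ S}
    rw [Nat.card_eq_fintype_card, Fintype.card_fin] at this
    rw [hcompl]
    omega
  have hcb : {j : Fin m | inr j ∉ S}.ncard = m - b := by
    have hcompl : {j : Fin m | inr j ∉ S} = {j : Fin m | inr j ∈ S}ᶜ := by
      ext j; simp
    have := Set.ncard_add_ncard_compl {j : Fin m | inr j ∈ S}
    rw [Nat.card_eq_fintype_card, Fintype.card_fin] at this
    rw [hcompl]
    omega
  have han : a ≤ n := by
    have := Set.ncard_le_ncard (Set.subset_univ {i : Fin n | inl i ∈ S}) Set.finite_univ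
    rwa [Set.ncard_univ, Nat.card_eq_fintype_card, Fintype.card_fin] at this
  have hSab : S.ncard = a + b := by
    have hdecomp : S = (inl '' {i : Fin n | inl i ∈ S}) ∪ (inr '' {j : Fin m | inr j ∈ S}) := by
      ext x
      cases x with
      | inl i => simp
      | inr j => simp
    rw [hdecomp, Set.ncard_union_eq, Set.ncard_image_of_injective _ inl_injective,
      Set.ncard_image_of_injective _ inr_injective]
    rw [Set.disjoint_left]
    rintro x ⟨i, -, rfl⟩ ⟨j, -, h⟩
    simp at h
  rw [hSab]
  rw [hcb] at h1
  rw [hca] at h2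
  exact arith hn hnk hm han (by omega) (by omega)

end Lower

section Upper
variable {k n m : ℕ}

private lemma pair_eq {α : Type*} [DecidableEq α] [LinearOrder α] {s : Finset α} (hs : s.card = 2)
    (hne : s.Nonempty) : s = {s.min' hne, s.max' hne} := by
  have hsub : ({s.min' hne, s.max' hne} : Finset α) ⊆ s := by
    intro x hx
    simp only [Finset.mem_insert, Finset.mem_singleton] at hx
    rcases hx with rfl | rfl
    · exact s.min'_mem hne
    · exact s.max'_mem hne
  have hlt : s.min' hne < s.max' hne := s.min'_lt_max'_of_card (by omega)
  have hcard2 : ({s.min' hne, s.max' hne} : Finset α).card = 2 := Finset.card_pair hlt.ne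
  exact (Finset.eq_of_subset_of_card_le hsub (by omega)).symm

private lemma upperbound (hk : 3 ≤ k) (hn : 3 ≤ n) (hnk : n < k)
    (hm : m = k - 1 + (n - 1).choose 2) :
    ∃ T : Set (Fin m), T.ncard = k - n ∧
      IsStrongGeodeticSet (completeBipartiteGraph (Fin n) (Fin m))
        (Set.range Sum.inl ∪ Sum.inr '' T) := by
  have hn0 : 0 < n := by omega
  have hm0 : 0 < m := by omega
  have hc : n.choose 2 = (n - 1).choose 2 + (n - 1) := by
    obtain ⟨n', rfl⟩ : ∃ n', n = n' + 1 := ⟨n - 1, by omega⟩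
    rw [Nat.choose_succ_succ, Nat.choose_one_right]
    simp [Nat.add_comm]
  have hcard : Fintype.card (Fin (k - n) ⊕ {s : Finset (Fin n) // s.card = 2}) = m := by
    simp only [Fintype.card_sum, Fintype.card_fin, Fintype.card_finset_len]
    omega
  let e := Fintype.equivFinOfCardEq hcard
  refine ⟨Set.range (fun x : Fin (k - n) => e (inl x)), ?_, ?_⟩
  · rw [← Set.image_univ, Set.ncard_image_of_injective _
        (show Function.Injective (fun x : Fin (k - n) => e (inl x)) from
          fun x y h => inl_injective (e.injective h)),
      Set.ncard_univ, Nat.card_eq_fintype_card, Fintype.card_fin]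
  · -- the strong geodetic property
    have hne2 : ∀ s : {s : Finset (Fin n) // s.card = 2}, s.1.Nonempty :=
      fun s => Finset.card_pos.mp (by rw [s.2]; omega)
    let A : {s : Finset (Fin n) // s.card = 2} → Fin n := fun s => s.1.min' (hne2 s)
    let B : {s : Finset (Fin n) // s.card = 2} → Fin n := fun s => s.1.max' (hne2 s)
    have hABlt : ∀ s, A s < B s := fun s => s.1.min'_lt_max'_of_card (by rw [s.2]; omega)
    have hpair : ∀ s, s.1 = {A s, B s} := fun s => pair_eq s.2 (hne2 s)
    let F : {s : Finset (Fin n) // s.card = 2} → (u : Fin n ⊕ Fin m) × (v : Fin n ⊕ Fin m) ×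
        (completeBipartiteGraph (Fin n) (Fin m)).Walk u v :=
      fun s => ⟨inl (A s), inl (B s),
        Walk.cons (kb_adj_lr (A s) (e (inr s)))
          (Walk.cons (kb_adj_lr (B s) (e (inr s))).symm Walk.nil)⟩
    let i0 : Fin n := ⟨0, hn0⟩
    let Gw : Fin (k - n) → (u : Fin n ⊕ Fin m) × (v : Fin n ⊕ Fin m) ×
        (completeBipartiteGraph (Fin n) (Fin m)).Walk u v :=
      fun x => ⟨inl i0, inr (e (inl x)), Walk.cons (kb_adj_lr i0 (e (inl x))) Walk.nil⟩
    refine ⟨Set.range F ∪ Set.range Gw, ⟨?_, ?_⟩, ?_⟩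
    · rintro q (⟨s, rfl⟩ | ⟨x, rfl⟩)
      · refine ⟨Or.inl (Set.mem_range_self _), Or.inl (Set.mem_range_self _), ?_, ?_⟩
        · rw [SimpleGraph.Walk.isPath_def]
          simp [F, (hABlt s).ne]
        · simp only [F, SimpleGraph.Walk.length_cons, SimpleGraph.Walk.length_nil]
          rw [kb_dist_ll hm0 (by exact fun h => (hABlt s).ne h)]
      · refine ⟨Or.inl (Set.mem_range_self _), Or.inr ⟨e (inl x), ⟨x, rfl⟩, rfl⟩, ?_, ?_⟩
        · rw [SimpleGraph.Walk.isPath_def]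
          simp [Gw]
        · simp only [Gw, SimpleGraph.Walk.length_cons, SimpleGraph.Walk.length_nil]
          rw [kb_dist_lr]
    · rintro q (⟨s, rfl⟩ | ⟨x, rfl⟩) q' (⟨s', rfl⟩ | ⟨x', rfl⟩)
      · constructor
        · rintro ⟨h1, h2⟩
          simp only [F, Sum.inl.injEq] at h1 h2
          have hss : s = s' := Subtype.ext (by rw [hpair s, hpair s', h1, h2])
          rw [hss]
        · rintro ⟨h1, h2⟩
          simp only [F, Sum.inl.injEq] at h1 h2
          exfalso
          have hcon : A s < A s := by
            calc A s < B s := hABlt s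
            _ = A s' := h2
            _ < B s' := hABlt s'
            _ = A s := h1.symm
          exact lt_irrefl _ hcon
      · constructor
        · rintro ⟨h1, h2⟩
          exact absurd h2 (by simp [F, Gw])
        · rintro ⟨h1, h2⟩
          exact absurd h1 (by simp [F, Gw])
      · constructor
        · rintro ⟨h1, h2⟩
          exact absurd h2 (by simp [F, Gw])
        · rintro ⟨h1, h2⟩
          exact absurd h2 (by simp [F, Gw])
      · constructor
        · rintro ⟨h1, h2⟩
          simp only [Gw, Sum.inr.injEq] at h2
          have hxx : x = x' := inl_injective (e.injective h2)
          rw [hxx]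
        · rintro ⟨h1, h2⟩
          exact absurd h2 (by simp [Gw])
    · intro w
      cases w with
      | inl i =>
        by_cases hi : i = i0
        · have hii' : i ≠ (⟨1, by omega⟩ : Fin n) := by
            subst hi; intro h; exact absurd (congrArg Fin.val h) (by simp [i0])
          let s0 : {s : Finset (Fin n) // s.card = 2} :=
            ⟨{i, ⟨1, by omega⟩}, Finset.card_pair hii'⟩
          refine ⟨F s0, Or.inl (Set.mem_range_self _), ?_⟩
          have hmem : i ∈ s0.1 := Finset.mem_insert_self _ _
          rw [hpair s0] at hmem
          simp only [Finset.mem_insert, Finset.mem_singleton] at hmem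
          rcases hmem with h | h <;> simp [F, h]
        · have hii' : i ≠ i0 := hi
          let s0 : {s : Finset (Fin n) // s.card = 2} := ⟨{i, i0}, Finset.card_pair hii'⟩
          refine ⟨F s0, Or.inl (Set.mem_range_self _), ?_⟩
          have hmem : i ∈ s0.1 := Finset.mem_insert_self _ _
          rw [hpair s0] at hmem
          simp only [Finset.mem_insert, Finset.mem_singleton] at hmem
          rcases hmem with h | h <;> simp [F, h]
      | inr j =>
        rcases hsy : e.symm j with x | s
        · have hj : e (inl x) = j := by rw [← hsy, Equiv.apply_symm_apply]
          refine ⟨Gw x, Or.inr (Set.mem_range_self _), ?_⟩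
          simp [Gw, hj]
        · have hj : e (inr s) = j := by rw [← hsy, Equiv.apply_symm_apply]
          refine ⟨F s, Or.inl (Set.mem_range_self _), ?_⟩
          simp [F, hj]

end Upper

/-- For `k ≥ 3` and `3 ≤ n < k`, if `m = k - 1 + C(n-1,2)`, then `sg(K_{n,m}) = k`,
and an optimal strong geodetic set consists of the whole part of size `n` together
with `k - n` vertices of the part of size `m`. -/
theorem sg_on_parabola (k n m : ℕ) (hk : 3 ≤ k) (hn : 3 ≤ n) (hnk : n < k)
    (hm : m = k - 1 + (n - 1).choose 2) :
    strongGeodeticNumber (completeBipartiteGraph (Fin n) (Fin m)) = k ∧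
      ∃ T : Set (Fin m), T.ncard = k - n ∧
        IsStrongGeodeticSet (completeBipartiteGraph (Fin n) (Fin m))
          (Set.range Sum.inl ∪ Sum.inr '' T) := by
  obtain ⟨T, hT, hTs⟩ := upperbound hk hn hnk hm
  refine ⟨?_, T, hT, hTs⟩
  have hcardS : (Set.range (Sum.inl : Fin n → Fin n ⊕ Fin m) ∪ Sum.inr '' T).ncard = k := by
    rw [← Set.image_univ, Set.ncard_union_eq, Set.ncard_image_of_injective _ inl_injective,
      Set.ncard_image_of_injective _ inr_injective, Set.ncard_univ, Nat.card_eq_fintype_card,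
      Fintype.card_fin, hT]
    · omega
    · rw [Set.disjoint_left]
      rintro x ⟨i, -, rfl⟩ ⟨j, -, h⟩
      simp at h
  have hmem : k ∈ {c | ∃ S : Set (Fin n ⊕ Fin m), S.ncard = c ∧
      IsStrongGeodeticSet (completeBipartiteGraph (Fin n) (Fin m)) S} :=
    ⟨_, hcardS, hTs⟩
  apply le_antisymm
  · exact Nat.sInf_le hmem
  · apply le_csInf ⟨k, hmem⟩
    rintro c ⟨S, rfl, hS⟩
    exact lowerbound hn hnk hm hS
end

section
/- For every complete multipartite graph there exists an optimal (minimum) strong geodetic set S such that for all but at most two parts X_i of the multipartition, the intersection S ∩ X_i is either empty or equals X_i. -/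
/-!
In `K_{n_1,…,n_r}` a shortest path has length at most `2`, so a shortest path between two
vertices of `S` covers a vertex `w ∉ S` only as `u - w - v`, with `u ≠ v` in one part other
than the part of `w`; in a geodesic selection distinct such `w` use distinct pairs `{u, v}`.
By Hall's theorem, `S` is strong geodetic exactly when its part sizes `s_i = |S ∩ X_i|` satisfy
`∑ (n_i - s_i) ≤ ∑ C(s_i, 2)` and `n_j - s_j + C(s_j, 2) ≤ ∑ C(s_i, 2)` for every `j`
(`IsFeasibleProfile`). Among the feasible profiles with the total of an optimal set, one
maximising `∑ C(s_i, 2)` has at most two parts with `0 < s_i < n_i`: given three, moving a vertex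
out of the smallest of them into one of the other two increases `∑ C(s_i, 2)`, and at least one
of these two moves keeps the profile feasible.
-/

namespace Nat

lemma add_one_choose_two (m : ℕ) : (m + 1).choose 2 = m.choose 2 + m := by
  simp [Nat.choose_succ_succ', add_comm]

lemma two_mul_le_choose_two_add_three : ∀ m : ℕ, 2 * m ≤ m.choose 2 + 3
  | 0 | 1 | 2 => by decide
  | m + 3 => by simp only [add_one_choose_two]; omega

end Nat

lemma Finset.sum_add_add_eq_of_eq_off_pair {ι M : Type*} [DecidableEq ι] [AddCommMonoid M]
    {s : Finset ι} {f g : ι → M} {a b : ι} (ha : a ∈ s) (hb : b ∈ s) (hab : a ≠ b)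
    (h : ∀ i, i ≠ a → i ≠ b → f i = g i) :
    ∑ i ∈ s, f i + g a + g b = ∑ i ∈ s, g i + f a + f b := by
  have hb : b ∈ s.erase a := mem_erase.2 ⟨hab.symm, hb⟩
  rw [← add_sum_erase _ f ha, ← add_sum_erase _ f hb, ← add_sum_erase _ g ha,
    ← add_sum_erase _ g hb,
    sum_congr rfl fun i hi => h i (ne_of_mem_erase (mem_of_mem_erase hi)) (ne_of_mem_erase hi)]
  abel

section Profile

open Finset

variable {ι : Type*} [Fintype ι]

structure IsFeasibleProfile (n s : ι → ℕ) : Prop where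
  le : ∀ i, s i ≤ n i
  sum_sub_le : ∑ i, (n i - s i) ≤ ∑ i, (s i).choose 2
  sub_add_choose_le : ∀ j, n j - s j + (s j).choose 2 ≤ ∑ i, (s i).choose 2

variable [DecidableEq ι] {n t : ι → ℕ}

lemma IsFeasibleProfile.exists_shift (h : IsFeasibleProfile n t) {a y : ι} (hay : a ≠ y)
    (ha : 0 < t a) (hty : t a ≤ t y) (hy : t y < n y)
    (hslack : n y - t y + (t y).choose 2 + t a ≤ ∑ i, (t i).choose 2 + 2) :
    ∃ t', IsFeasibleProfile n t' ∧ ∑ i, t' i = ∑ i, t i ∧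
      ∑ i, (t i).choose 2 < ∑ i, (t' i).choose 2 := by
  -- The shift raises `∑ C(t i, 2)` by `t y - t a + 1`; `hslack` is the constraint at `y` after it.
  set t' := Function.update (Function.update t a (t a - 1)) y (t y + 1)
  have ht'a : t' a = t a - 1 := by simp [t', hay]
  have ht'y : t' y = t y + 1 := by simp [t']
  have ht' : ∀ i, i ≠ a → i ≠ y → t' i = t i := fun i hia hiy => by simp [t', hia, hiy]
  have hsum := sum_add_add_eq_of_eq_off_pair (mem_univ a) (mem_univ y) hay ht'
  have hchoose := sum_add_add_eq_of_eq_off_pair (f := fun i => (t' i).choose 2)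
    (g := fun i => (t i).choose 2) (mem_univ a) (mem_univ y) hay fun i hia hiy => by
      simp only [ht' i hia hiy]
  have hsub := sum_add_add_eq_of_eq_off_pair (f := fun i => n i - t' i)
    (g := fun i => n i - t i) (mem_univ a) (mem_univ y) hay fun i hia hiy => by
      simp only [ht' i hia hiy]
  have hca : (t a).choose 2 = (t a - 1).choose 2 + (t a - 1) := by
    rw [← Nat.add_one_choose_two, Nat.sub_add_cancel ha]
  have hcy := Nat.add_one_choose_two (t y)
  simp only [ht'a, ht'y] at hsum hchoose hsub
  have hla := h.le a
  refine ⟨t', ⟨fun i => ?_, ?_, fun j => ?_⟩, by omega, by omega⟩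
  · rcases eq_or_ne i a with rfl | hia
    · rw [ht'a]; omega
    rcases eq_or_ne i y with rfl | hiy
    · rw [ht'y]; omega
    · rw [ht' i hia hiy]; exact h.le i
  · have := h.sum_sub_le
    omega
  · have hj := h.sub_add_choose_le j
    rcases eq_or_ne j a with rfl | hja
    · rw [ht'a]; omega
    rcases eq_or_ne j y with rfl | hjy
    · rw [ht'y]; omega
    · rw [ht' j hja hjy]; omega

theorem IsFeasibleProfile.exists_card_partial_le_two {s : ι → ℕ} (h : IsFeasibleProfile n s) :
    ∃ t, IsFeasibleProfile n t ∧ ∑ i, t i = ∑ i, s i ∧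
      #{i | 0 < t i ∧ t i < n i} ≤ 2 := by
  set F := {t | IsFeasibleProfile n t ∧ ∑ i, t i = ∑ i, s i}
  have hF : F.Finite :=
    (Set.Finite.pi (t := fun i => Set.Iic (n i)) fun i => Set.finite_Iic (n i)).subset
      fun t ht i _ => ht.1.le i
  obtain ⟨t, ⟨ht, hts⟩, hmax⟩ :=
    hF.exists_maximalFor (fun t => ∑ i, (t i).choose 2) F ⟨s, h, rfl⟩
  refine ⟨t, ht, hts, ?_⟩
  by_contra! hT
  set T : Finset ι := {i | 0 < t i ∧ t i < n i}
  obtain ⟨a, haT, hmin⟩ := T.exists_min_image t (card_pos.1 (by omega))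
  obtain ⟨b, hb, c, hc, hbc⟩ := one_lt_card.1 (by rw [card_erase_of_mem haT]; omega :
    1 < #(T.erase a))
  have hpartial : ∀ i ∈ T, 0 < t i ∧ t i < n i := fun i hi => (mem_filter.1 hi).2
  have hstuck : ∀ y ∈ T.erase a,
      ∑ i, (t i).choose 2 + 3 ≤ n y - t y + (t y).choose 2 + t a := by
    intro y hy
    by_contra! hlt
    obtain ⟨t', ht', ht's, hgt⟩ := ht.exists_shift (ne_of_mem_erase hy).symm
      (hpartial a haT).1 (hmin y (mem_of_mem_erase hy)) (hpartial y (mem_of_mem_erase hy)).2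
      (by omega)
    exact hgt.not_ge (hmax ⟨ht', ht's.trans hts⟩ hgt.le)
  have hbc_choose : (t b).choose 2 + (t c).choose 2 ≤ ∑ i ∈ univ.erase a, (t i).choose 2 :=
    add_le_sum (f := fun i => (t i).choose 2) (fun _ _ => Nat.zero_le _)
      (mem_erase.2 ⟨ne_of_mem_erase hb, mem_univ b⟩)
      (mem_erase.2 ⟨ne_of_mem_erase hc, mem_univ c⟩) hbc
  have hbc_sub : n b - t b + (n c - t c) ≤ ∑ i, (n i - t i) :=
    add_le_sum (f := fun i => n i - t i) (fun _ _ => Nat.zero_le _) (mem_univ b) (mem_univ c) hbc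
  have hsplit := add_sum_erase univ (fun i => (t i).choose 2) (mem_univ a)
  have htotal := ht.sum_sub_le
  have hsmall := Nat.two_mul_le_choose_two_add_three (t a)
  have hstuck_b := hstuck b hb
  have hstuck_c := hstuck c hc
  -- `hstuck_b + hstuck_c` and `htotal` give `C(t a, 2) + 6 ≤ 2 * t a`, contradicting `hsmall`
  omega

end Profile

namespace SimpleGraph

variable {V : Type*} {G : SimpleGraph V}

lemma dist_eq_two_of_adj_of_adj {u v w : V} (huv : u ≠ v) (hn : ¬G.Adj u v) (hw : G.Adj u w)
    (hw' : G.Adj w v) : G.dist u v = 2 := by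
  have h : G.edist u v = 2 :=
    edist_eq_two_iff.2 ⟨huv, hn, w, (G.mem_commonNeighbors).2 ⟨hw, hw'.symm⟩⟩
  rw [dist, h]
  rfl

lemma Walk.support_eq_of_length_le_two_s9 {u v w : V} (p : G.Walk u v) (hp : p.length ≤ 2)
    (hw : w ∈ p.support) (hwu : w ≠ u) (hwv : w ≠ v) :
    p.support = [u, w, v] ∧ G.Adj u w ∧ G.Adj w v := by
  match p, hp with
  | .nil, _ => simp_all
  | .cons _ .nil, _ => simp_all
  | .cons h (.cons h' .nil), _ =>
    obtain rfl : w = _ := by simpa [hwu, hwv] using hw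
    exact ⟨rfl, h, h'⟩
  | .cons _ (.cons _ (.cons _ _)), hp => simp at hp

end SimpleGraph

section GeodesicSelection

open SimpleGraph

variable {V : Type*} {G : SimpleGraph V} {S : Set V}

lemma IsGeodesicSelection.midpoint_eq {P : Set ((u : V) × (v : V) × G.Walk u v)}
    (hP : IsGeodesicSelection G S P) {q q' : (u : V) × (v : V) × G.Walk u v} (hq : q ∈ P)
    (hq' : q' ∈ P) {w w' : V} (hs : q.2.2.support = [q.1, w, q.2.1])
    (hs' : q'.2.2.support = [q'.1, w', q'.2.1]) (h : s(q.1, q.2.1) = s(q'.1, q'.2.1)) :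
    w = w' := by
  rcases Sym2.eq_iff.1 h with h | h
  · obtain rfl := (hP.2 q hq q' hq').1 h
    simp_all
  · have := (hP.2 q hq q' hq').2 h
    simp_all

theorem isStrongGeodeticSet_of_midpoints (u v : ↥Sᶜ → V)
    (hmem : ∀ w, u w ∈ S ∧ v w ∈ S) (hadj : ∀ w, G.Adj (u w) w ∧ G.Adj w (v w))
    (hdist : ∀ w, G.dist (u w) (v w) = 2) (hinj : Function.Injective fun w => s(u w, v w)) :
    IsStrongGeodeticSet G S := by
  -- the trivial paths at the vertices of `S` and the paths `u w - w - v w` in both directions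
  let P : Set ((u : V) × (v : V) × G.Walk u v) :=
    {q | (q.1 ∈ S ∧ q.2.1 ∈ S ∧ q.2.2.IsPath ∧ q.2.2.length = G.dist q.1 q.2.1) ∧
      (q.1 = q.2.1 ∧ q.2.2.support = [q.1] ∨
        ∃ w : ↥Sᶜ, s(u w, v w) = s(q.1, q.2.1) ∧ q.2.2.support = [q.1, w, q.2.1])}
  have hne : ∀ w, u w ≠ v w := fun w h => by simpa [h] using hdist w
  have htrivial : ∀ q ∈ P, q.1 = q.2.1 → q.2.2.support = [q.1] := by
    rintro ⟨a, b, p⟩ (⟨-, ⟨-, h⟩ | ⟨w, hw, -⟩⟩) (rfl : a = b)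
    · exact h
    · exact (hne w (by simp_all)).elim
  have hmid : ∀ q ∈ P, q.1 ≠ q.2.1 →
      ∃ w : ↥Sᶜ, s(u w, v w) = s(q.1, q.2.1) ∧ q.2.2.support = [q.1, w, q.2.1] := by
    rintro q (⟨-, ⟨hq, -⟩ | h⟩) hq'
    · exact (hq' hq).elim
    · exact h
  refine ⟨P, ⟨fun q hq => hq.1, ?_⟩, fun w => ?_⟩
  · rintro ⟨a, b, p⟩ hq ⟨a', b', p'⟩ hq'
    refine ⟨?_, ?_⟩
    · rintro ⟨rfl, rfl⟩
      suffices p.support = p'.support by rw [Walk.ext_support this]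
      rcases eq_or_ne a b with rfl | hab
      · rw [htrivial _ hq rfl, htrivial _ hq' rfl]
      · obtain ⟨w, hw, hs⟩ := hmid _ hq hab
        obtain ⟨w', hw', hs'⟩ := hmid _ hq' hab
        obtain rfl := hinj (hw.trans hw'.symm)
        exact hs.trans hs'.symm
    · rintro ⟨rfl, rfl⟩
      rcases eq_or_ne a b with rfl | hab
      · rw [htrivial _ hq rfl, htrivial _ hq' rfl]
        rfl
      · obtain ⟨w, hw, hs⟩ := hmid _ hq hab
        obtain ⟨w', hw', hs'⟩ := hmid _ hq' hab.symm
        obtain rfl := hinj (hw.trans (hw'.trans Sym2.eq_swap).symm)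
        simp [hs, hs']
  · by_cases hw : w ∈ S
    · exact ⟨⟨w, w, .nil⟩, ⟨⟨hw, hw, .nil, by simp⟩, .inl ⟨rfl, rfl⟩⟩, by simp⟩
    · let x : ↥Sᶜ := ⟨w, hw⟩
      have hpath : (Walk.cons (hadj x).1 (.cons (hadj x).2 .nil)).IsPath := by
        simp [Walk.isPath_def, (hadj x).1.ne, (hadj x).2.ne, hne x]
      exact ⟨⟨_, _, .cons (hadj x).1 (.cons (hadj x).2 .nil)⟩,
        ⟨⟨(hmem x).1, (hmem x).2, hpath, by simp [hdist x]⟩, .inr ⟨x, rfl, rfl⟩⟩, by simp [x]⟩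

theorem isStrongGeodeticSet_univ : IsStrongGeodeticSet G Set.univ :=
  have : IsEmpty ↥(Set.univ : Set V)ᶜ := ⟨fun w => w.2 trivial⟩
  isStrongGeodeticSet_of_midpoints isEmptyElim isEmptyElim isEmptyElim isEmptyElim isEmptyElim
    isEmptyElim

end GeodesicSelection

namespace SimpleGraph.completeMultipartiteGraph

variable {ι : Type*} {V : ι → Type*}

lemma adj_iff {u v : Σ i, V i} : (completeMultipartiteGraph V).Adj u v ↔ u.1 ≠ v.1 := Iff.rfl

lemma dist_le_two {u w : Σ i, V i} (h : (completeMultipartiteGraph V).Adj u w) (v : Σ i, V i) :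
    (completeMultipartiteGraph V).dist u v ≤ 2 := by
  by_cases huv : u.1 = v.1
  · have hwv : (completeMultipartiteGraph V).Adj w v := by rw [adj_iff, ← huv]; exact h.symm
    exact (dist_le (.cons h (.cons hwv .nil))).trans (by simp)
  · exact (dist_le (.cons (adj_iff.2 huv) .nil)).trans (by simp)

lemma dist_eq_two {u v w : Σ i, V i} (huv : u ≠ v) (h : u.1 = v.1) (hw : w.1 ≠ u.1) :
    (completeMultipartiteGraph V).dist u v = 2 :=
  dist_eq_two_of_adj_of_adj huv (fun h' => h' h) (adj_iff.2 hw.symm) (adj_iff.2 (h ▸ hw))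

lemma support_eq_of_length_eq_dist {u v w : Σ i, V i} (p : (completeMultipartiteGraph V).Walk u v)
    (hp : p.length = (completeMultipartiteGraph V).dist u v) (hw : w ∈ p.support) (hwu : w ≠ u)
    (hwv : w ≠ v) : p.support = [u, w, v] ∧ u ≠ v ∧ u.1 = v.1 ∧ w.1 ≠ u.1 := by
  have hnil : ¬p.Nil := fun h => hwu (by simpa [Walk.nil_iff_support_eq.1 h] using hw)
  obtain ⟨hs, hu, -⟩ := p.support_eq_of_length_le_two_s9 (hp ▸ dist_le_two (p.adj_snd hnil) v)
    hw hwu hwv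
  have h2 : p.length = 2 := by simpa using congrArg List.length hs
  refine ⟨hs, fun huv => ?_, by_contra fun huv => ?_, (adj_iff.1 hu).symm⟩
  · subst huv
    simp_all
  · rw [hp, dist_eq_one_iff_adj.2 (adj_iff.2 huv)] at h2
    omega

end SimpleGraph.completeMultipartiteGraph

section Slices

open Finset

variable {ι : Type*} [DecidableEq ι] {V : ι → Type*}

def partSlice (S : Finset (Σ i, V i)) (i : ι) : Finset (Σ i, V i) := {v ∈ S | v.1 = i}

lemma partSlice_mono {S T : Finset (Σ i, V i)} (h : S ⊆ T) (i : ι) :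
    partSlice S i ⊆ partSlice T i :=
  filter_subset_filter _ h

lemma partSlice_subset (S : Finset (Σ i, V i)) (i : ι) : partSlice S i ⊆ S :=
  filter_subset _ S

def partPairs [∀ i, DecidableEq (V i)] (S : Finset (Σ i, V i)) (i : ι) :
    Finset (Sym2 (Σ i, V i)) :=
  (partSlice S i).offDiag.image (Function.uncurry Sym2.mk)

def crossPairs [Fintype ι] [∀ i, DecidableEq (V i)] (S : Finset (Σ i, V i)) (j : ι) :
    Finset (Sym2 (Σ i, V i)) :=
  (univ.erase j).biUnion (partPairs S)

lemma coe_partSlice (S : Finset (Σ i, V i)) (i : ι) :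
    (partSlice S i : Set (Σ i, V i)) = ↑S ∩ {v | v.1 = i} :=
  coe_filter _ _

lemma card_partSlice_sigma [Fintype ι] (A : ∀ i, Finset (V i)) (i : ι) :
    #(partSlice (univ.sigma A) i) = #(A i) := by
  have : partSlice (univ.sigma A) i = (A i).map (Function.Embedding.sigmaMk i) := by
    ext ⟨j, x⟩
    simp only [partSlice, mem_filter, mem_sigma, mem_univ, true_and, mem_map,
      Function.Embedding.sigmaMk_apply]
    constructor
    · rintro ⟨hx, rfl⟩
      exact ⟨x, hx, rfl⟩
    · rintro ⟨y, hy, h⟩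
      cases h
      exact ⟨hy, rfl⟩
  rw [this, card_map]

lemma card_partSlice_univ [Fintype ι] [∀ i, Fintype (V i)] (i : ι) :
    #(partSlice (univ : Finset (Σ i, V i)) i) = Fintype.card (V i) := by
  rw [← univ_sigma_univ, card_partSlice_sigma, card_univ]

lemma exists_card_partSlice_eq [Fintype ι] [∀ i, Fintype (V i)] {s : ι → ℕ}
    (hs : ∀ i, s i ≤ Fintype.card (V i)) :
    ∃ S : Finset (Σ i, V i), ∀ i, #(partSlice S i) = s i := by
  have (i : ι) : ∃ A : Finset (V i), #A = s i := by
    obtain ⟨A, -, hA⟩ := exists_subset_card_eq (s := univ) ((card_univ (α := V i)).symm ▸ hs i)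
    exact ⟨A, hA⟩
  choose A hA using this
  exact ⟨univ.sigma A, fun i => (card_partSlice_sigma A i).trans (hA i)⟩

lemma card_partSlice_pos_of_ne_empty {S : Finset (Σ i, V i)} {i : ι}
    (h : ↑S ∩ {v : Σ i, V i | v.1 = i} ≠ ∅) : 0 < #(partSlice S i) := by
  rw [card_pos, nonempty_iff_ne_empty, Ne, ← coe_eq_empty, coe_partSlice]
  exact h

lemma card_partSlice_lt_of_ne [Fintype ι] [∀ i, Fintype (V i)] {S : Finset (Σ i, V i)} {i : ι}
    (h : ↑S ∩ {v : Σ i, V i | v.1 = i} ≠ {v | v.1 = i}) :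
    #(partSlice S i) < Fintype.card (V i) := by
  rw [← card_partSlice_univ]
  refine card_lt_card
    (Finset.ssubset_iff_subset_ne.2 ⟨partSlice_mono (subset_univ S) i, fun h' => h ?_⟩)
  rw [← coe_partSlice, h', coe_partSlice, coe_univ, Set.univ_inter]

lemma ncard_setOf_partial_le [Fintype ι] [∀ i, Fintype (V i)] (S : Finset (Σ i, V i)) :
    {i | ↑S ∩ {v : Σ i, V i | v.1 = i} ≠ ∅ ∧
        ↑S ∩ {v : Σ i, V i | v.1 = i} ≠ {v | v.1 = i}}.ncard ≤
      #{i | 0 < #(partSlice S i) ∧ #(partSlice S i) < Fintype.card (V i)} := by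
  rw [← Set.ncard_coe_finset]
  refine Set.ncard_le_ncard (fun i hi => ?_) (finite_toSet _)
  rw [coe_filter]
  exact ⟨mem_univ i, card_partSlice_pos_of_ne_empty hi.1, card_partSlice_lt_of_ne hi.2⟩

lemma card_partSlice_compl [Fintype ι] [∀ i, Fintype (V i)] [∀ i, DecidableEq (V i)]
    (S : Finset (Σ i, V i)) (i : ι) :
    #(partSlice Sᶜ i) = Fintype.card (V i) - #(partSlice S i) := by
  have : partSlice Sᶜ i = partSlice univ i \ partSlice S i := by
    ext v
    simp only [partSlice, mem_filter, mem_compl, mem_sdiff, mem_univ, true_and]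
    tauto
  rw [this, card_sdiff_of_subset (partSlice_mono (subset_univ S) i), card_partSlice_univ]

lemma card_eq_sum_card_partSlice [Fintype ι] (S : Finset (Σ i, V i)) :
    #S = ∑ i, #(partSlice S i) :=
  card_eq_sum_card_fiberwise fun x _ => mem_univ x.1

lemma mem_partPairs [∀ i, DecidableEq (V i)] {S : Finset (Σ i, V i)} {i : ι}
    {z : Sym2 (Σ i, V i)} :
    z ∈ partPairs S i ↔ ∃ a b, a ∈ S ∧ b ∈ S ∧ a ≠ b ∧ a.1 = i ∧ b.1 = i ∧ s(a, b) = z := by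
  simp only [partPairs, partSlice, mem_image, mem_offDiag, mem_filter, Prod.exists,
    Function.uncurry_apply_pair]
  aesop

lemma card_biUnion_partPairs [∀ i, DecidableEq (V i)] (S : Finset (Σ i, V i)) (T : Finset ι) :
    #(T.biUnion (partPairs S)) = ∑ i ∈ T, (#(partSlice S i)).choose 2 := by
  rw [card_biUnion]
  · exact sum_congr rfl fun i _ => Sym2.card_image_offDiag _
  · intro i _ j _ hij
    refine disjoint_left.2 fun z hi hj => hij ?_
    obtain ⟨a, b, -, -, -, rfl, -, rfl⟩ := mem_partPairs.1 hi
    obtain ⟨a', b', -, -, -, rfl, hb', h⟩ := mem_partPairs.1 hj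
    rcases Sym2.eq_iff.1 h with ⟨rfl, -⟩ | ⟨-, rfl⟩
    · rfl
    · exact hb'

lemma mem_crossPairs [Fintype ι] [∀ i, DecidableEq (V i)] {S : Finset (Σ i, V i)} {j : ι}
    {z : Sym2 (Σ i, V i)} :
    z ∈ crossPairs S j ↔ ∃ a b, a ∈ S ∧ b ∈ S ∧ a ≠ b ∧ a.1 = b.1 ∧ a.1 ≠ j ∧ s(a, b) = z := by
  simp only [crossPairs, mem_biUnion, mem_erase, mem_univ, and_true, mem_partPairs]
  constructor
  · rintro ⟨i, hij, a, b, ha, hb, hab, rfl, hbi, rfl⟩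
    exact ⟨a, b, ha, hb, hab, hbi.symm, hij, rfl⟩
  · rintro ⟨a, b, ha, hb, hab, hab', haj, rfl⟩
    exact ⟨a.1, haj, a, b, ha, hb, hab, rfl, hab'.symm, rfl⟩

end Slices

section Characterization

open Finset SimpleGraph

variable {ι : Type*} [Fintype ι] [DecidableEq ι] {V : ι → Type*} [∀ i, DecidableEq (V i)]
  {S : Finset (Σ i, V i)}

lemma exists_injective_crossPairs_of_isStrongGeodeticSet
    (h : IsStrongGeodeticSet (completeMultipartiteGraph V) S) :
    ∃ f : {w // w ∉ S} → Sym2 (Σ i, V i),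
      Function.Injective f ∧ ∀ w, f w ∈ crossPairs S w.1.1 := by
  obtain ⟨P, hP, hcover⟩ := h
  choose q hqP hwq using hcover
  have hgeo (w : {w // w ∉ S}) := hP.1 _ (hqP w)
  have hmid (w : {w // w ∉ S}) := completeMultipartiteGraph.support_eq_of_length_eq_dist _
    (hgeo w).2.2.2 (hwq w) (fun h => w.2 (h ▸ (hgeo w).1)) (fun h => w.2 (h ▸ (hgeo w).2.1))
  refine ⟨fun w => s((q w).1, (q w).2.1), fun w w' h => Subtype.ext ?_, fun w => ?_⟩
  · exact hP.midpoint_eq (hqP w) (hqP w') (hmid w).1 (hmid w').1 h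
  · obtain ⟨-, hne, hpart, hw⟩ := hmid w
    exact mem_crossPairs.2 ⟨_, _, (hgeo w).1, (hgeo w).2.1, hne, hpart, hw.symm, rfl⟩

lemma isStrongGeodeticSet_of_injective_crossPairs {f : {w // w ∉ S} → Sym2 (Σ i, V i)}
    (hf : Function.Injective f) (hfS : ∀ w, f w ∈ crossPairs S w.1.1) :
    IsStrongGeodeticSet (completeMultipartiteGraph V) S := by
  choose u v hu hv huv hpart hw hf_eq using fun w => mem_crossPairs.1 (hfS w)
  refine isStrongGeodeticSet_of_midpoints u v (fun w => ⟨hu w, hv w⟩)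
    (fun w => ⟨completeMultipartiteGraph.adj_iff.2 (hw w),
      completeMultipartiteGraph.adj_iff.2 fun h => hw w (hpart w ▸ h.symm)⟩)
    (fun w => completeMultipartiteGraph.dist_eq_two (huv w) (hpart w) fun h => hw w h.symm)
    fun w w' h => hf ?_
  rw [← hf_eq, ← hf_eq]
  exact h

variable [∀ i, Fintype (V i)]

lemma IsFeasibleProfile.card_le_card_biUnion_crossPairs
    (h : IsFeasibleProfile (fun i => Fintype.card (V i)) fun i => #(partSlice S i))
    (B : Finset {w // w ∉ S}) : #B ≤ #(B.biUnion fun w => crossPairs S w.1.1) := by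
  have hB_le (T : Finset (Σ i, V i)) (hT : ∀ w ∈ B, w.1 ∈ T) : #B ≤ #T :=
    card_le_card_of_injOn Subtype.val hT Subtype.val_injective.injOn
  by_cases hpart : ∃ j, ∀ w ∈ B, w.1.1 = j
  · obtain ⟨j, hj⟩ := hpart
    rcases B.eq_empty_or_nonempty with rfl | ⟨w₀, hw₀⟩
    · simp
    have := h.sub_add_choose_le j
    have := sum_erase_add univ (fun i => (#(partSlice S i)).choose 2) (mem_univ j)
    calc #B ≤ #(partSlice Sᶜ j) := hB_le _ fun w hw => mem_filter.2 ⟨mem_compl.2 w.2, hj w hw⟩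
      _ ≤ ∑ i ∈ univ.erase j, (#(partSlice S i)).choose 2 := by
        rw [card_partSlice_compl]
        omega
      _ = #(crossPairs S w₀.1.1) := by rw [hj w₀ hw₀, crossPairs, card_biUnion_partPairs]
      _ ≤ #(B.biUnion fun w => crossPairs S w.1.1) :=
        card_le_card fun z hz => mem_biUnion.2 ⟨w₀, hw₀, hz⟩
  · push Not at hpart
    calc #B ≤ #Sᶜ := hB_le _ fun w _ => mem_compl.2 w.2
      _ = ∑ i, (Fintype.card (V i) - #(partSlice S i)) := by
        rw [card_eq_sum_card_partSlice Sᶜ]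
        exact sum_congr rfl fun i _ => card_partSlice_compl S i
      _ ≤ ∑ i, (#(partSlice S i)).choose 2 := h.sum_sub_le
      _ = #(univ.biUnion (partPairs S)) := (card_biUnion_partPairs S univ).symm
      _ ≤ #(B.biUnion fun w => crossPairs S w.1.1) := card_le_card fun z hz => by
        obtain ⟨i, -, hz⟩ := mem_biUnion.1 hz
        obtain ⟨w, hw, hwi⟩ := hpart i
        exact mem_biUnion.2 ⟨w, hw, mem_biUnion.2 ⟨i, mem_erase.2 ⟨hwi.symm, mem_univ i⟩, hz⟩⟩

lemma isFeasibleProfile_of_card_le_card_biUnion_crossPairs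
    (hall : ∀ B : Finset {w // w ∉ S}, #B ≤ #(B.biUnion fun w => crossPairs S w.1.1)) :
    IsFeasibleProfile (fun i => Fintype.card (V i)) fun i => #(partSlice S i) := by
  have hcard {T : Finset (Σ i, V i)} (hT : T ⊆ Sᶜ) : #(T.subtype (· ∉ S)) = #T := by
    rw [card_subtype, filter_true_of_mem fun w hw => mem_compl.1 (hT hw)]
  refine ⟨fun i => ?_, ?_, fun j => ?_⟩
  · exact card_partSlice_univ (V := V) i ▸ card_le_card (partSlice_mono (subset_univ S) i)
  · calc ∑ i, (Fintype.card (V i) - #(partSlice S i)) = #(Sᶜ.subtype (· ∉ S)) := by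
          rw [hcard subset_rfl, card_eq_sum_card_partSlice Sᶜ]
          exact sum_congr rfl fun i _ => (card_partSlice_compl S i).symm
      _ ≤ #((Sᶜ.subtype (· ∉ S)).biUnion fun w => crossPairs S w.1.1) := hall _
      _ ≤ #(univ.biUnion (partPairs S)) :=
        card_le_card (biUnion_subset.2 fun w _ => biUnion_subset_biUnion_of_subset_left _
          (erase_subset _ _))
      _ = ∑ i, (#(partSlice S i)).choose 2 := card_biUnion_partPairs S univ
  · have hsub : ((partSlice Sᶜ j).subtype (· ∉ S)).biUnion (fun w => crossPairs S w.1.1)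
        ⊆ crossPairs S j := biUnion_subset.2 fun w hw => by
      rw [(mem_filter.1 (mem_subtype.1 hw)).2]
    have := (hall _).trans (card_le_card hsub)
    rw [hcard (partSlice_subset Sᶜ j), card_partSlice_compl, crossPairs,
      card_biUnion_partPairs] at this
    have := sum_erase_add univ (fun i => (#(partSlice S i)).choose 2) (mem_univ j)
    omega

theorem isStrongGeodeticSet_iff_isFeasibleProfile :
    IsStrongGeodeticSet (completeMultipartiteGraph V) S ↔
      IsFeasibleProfile (fun i => Fintype.card (V i)) fun i => #(partSlice S i) := by
  constructor
  · intro h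
    obtain ⟨f, hf, hfS⟩ := exists_injective_crossPairs_of_isStrongGeodeticSet h
    exact isFeasibleProfile_of_card_le_card_biUnion_crossPairs
      ((all_card_le_biUnion_card_iff_exists_injective _).2 ⟨f, hf, hfS⟩)
  · intro h
    obtain ⟨f, hf, hfS⟩ :=
      (all_card_le_biUnion_card_iff_exists_injective _).1 h.card_le_card_biUnion_crossPairs
    exact isStrongGeodeticSet_of_injective_crossPairs hf hfS

end Characterization

theorem exists_optimal_sgs_two_partial_parts_general {ι : Type*} [Fintype ι]
    (V : ι → Type*) [∀ i, Fintype (V i)] :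
    ∃ S : Set (Σ i, V i),
      IsStrongGeodeticSet (SimpleGraph.completeMultipartiteGraph V) S ∧
      S.ncard = strongGeodeticNumber (SimpleGraph.completeMultipartiteGraph V) ∧
      {i : ι | S ∩ {v : Σ j, V j | v.1 = i} ≠ ∅ ∧
               S ∩ {v : Σ j, V j | v.1 = i} ≠ {v : Σ j, V j | v.1 = i}}.ncard ≤ 2 := by
  classical
  obtain ⟨S₀, hS₀card, hS₀⟩ := Nat.sInf_mem (⟨_, Set.univ, rfl, isStrongGeodeticSet_univ⟩ :
    {k | ∃ S : Set (Σ i, V i), S.ncard = k ∧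
      IsStrongGeodeticSet (SimpleGraph.completeMultipartiteGraph V) S}.Nonempty)
  lift S₀ to Finset (Σ i, V i) using S₀.toFinite
  obtain ⟨s, hs, hsum, hpartial⟩ :=
    (isStrongGeodeticSet_iff_isFeasibleProfile.1 hS₀).exists_card_partial_le_two
  obtain ⟨S, hS⟩ := exists_card_partSlice_eq hs.le
  have hSs : (fun i => (partSlice S i).card) = s := funext hS
  refine ⟨S, isStrongGeodeticSet_iff_isFeasibleProfile.2 (hSs ▸ hs), ?_, ?_⟩
  · rw [strongGeodeticNumber, ← hS₀card, Set.ncard_coe_finset, Set.ncard_coe_finset,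
      card_eq_sum_card_partSlice, card_eq_sum_card_partSlice S₀, ← hsum, hSs]
  · exact (ncard_setOf_partial_le S).trans (by simpa only [hS] using hpartial)

/-- Every complete multipartite graph has an optimal strong geodetic set whose
intersection with all but at most two parts is either empty or the whole part. -/
theorem exists_optimal_sgs_two_partial_parts {ι : Type*} [Fintype ι]
    (V : ι → Type*) [∀ i, Fintype (V i)] [∀ i, Nonempty (V i)] :
    ∃ S : Set (Σ i, V i),
      IsStrongGeodeticSet (SimpleGraph.completeMultipartiteGraph V) S ∧
      S.ncard = strongGeodeticNumber (SimpleGraph.completeMultipartiteGraph V) ∧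
      {i : ι | S ∩ {v : Σ j, V j | v.1 = i} ≠ ∅ ∧
               S ∩ {v : Σ j, V j | v.1 = i} ≠ {v : Σ j, V j | v.1 = i}}.ncard ≤ 2 :=
  exists_optimal_sgs_two_partial_parts_general V
end

section
/- For positive integers k and m, sg(K_{⟨k^m⟩}) ≤ ⌈2m/(k+1)⌉ · k, where K_{⟨k^m⟩} is the complete multipartite graph with m parts each of size k. -/
/-!
Let `S` consist of the vertices of `t = ⌈2m/(k+1)⌉` parts (of all parts if `t ≥ m`). Two
vertices of one part are at distance 2, and any vertex outside their part is the midpoint of a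
geodesic between them. The `t·C(k,2)` pairs inside the chosen parts are at least as many as the
`(m - t)·k` vertices outside them, so an injection gives every outside vertex its own pair, whose
geodesic is routed through it; the vertices of `S` themselves are covered by trivial paths.
-/

open Finset SimpleGraph

section StrongGeodetic

variable {V : Type*} {G : SimpleGraph V} {S : Set V}

theorem strongGeodeticNumber_le_ncard (h : IsStrongGeodeticSet G S) :
    strongGeodeticNumber G ≤ S.ncard :=
  Nat.sInf_le ⟨S, rfl, h⟩

theorem SimpleGraph.dist_eq_two_of_adj_of_adj_s12 {u v w : V} (hne : u ≠ v) (hnadj : ¬ G.Adj u v)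
    (huw : G.Adj u w) (hwv : G.Adj w v) : G.dist u v = 2 := by
  rw [SimpleGraph.dist, ENat.toNat_eq_iff two_ne_zero, Nat.cast_ofNat, edist_eq_two_iff]
  exact ⟨hne, hnadj, w, huw, hwv.symm⟩

theorem SimpleGraph.isPath_cons_cons_nil {u v w : V} (hne : u ≠ v) (huw : G.Adj u w)
    (hwv : G.Adj w v) : (Walk.cons huw (.cons hwv .nil)).IsPath := by
  simp [Walk.isPath_def, huw.ne, hwv.ne, hne]

/-- The two-point sets `f w` are the pairs of `S` whose chosen geodesic runs through `w`. -/
theorem isStrongGeodeticSet_of_injective {f : ↥Sᶜ → Sym2 V} (hf : Function.Injective f)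
    (hS : ∀ w, ∀ x ∈ f w, x ∈ S ∧ G.Adj x w) (hdiag : ∀ w, ¬ (f w).IsDiag)
    (hedge : ∀ w, f w ∉ G.edgeSet) : IsStrongGeodeticSet G S := by
  have hne {w u v} (hfw : f w = s(u, v)) : u ≠ v := by simpa [hfw] using hdiag w
  let P : Set ((u : V) × (v : V) × G.Walk u v) :=
    {q | ∃ u ∈ S, q = ⟨u, u, .nil⟩} ∪
    {q | ∃ (w : ↥Sᶜ) (u v : V) (huw : G.Adj u w) (hwv : G.Adj w v),
      f w = s(u, v) ∧ q = ⟨u, v, .cons huw (.cons hwv .nil)⟩}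
  refine ⟨P, ⟨?_, ?_⟩, ?_⟩
  · rintro q (⟨u, hu, rfl⟩ | ⟨w, u, v, huw, hwv, hfw, rfl⟩)
    · exact ⟨hu, hu, .nil, dist_self.symm⟩
    · have hnadj : ¬ G.Adj u v := by simpa [hfw] using hedge w
      exact ⟨(hS w u (hfw ▸ Sym2.mem_mk_left u v)).1, (hS w v (hfw ▸ Sym2.mem_mk_right u v)).1,
        isPath_cons_cons_nil (hne hfw) huw hwv,
        (dist_eq_two_of_adj_of_adj_s12 (hne hfw) hnadj huw hwv).symm⟩
  · rintro q (⟨u, -, rfl⟩ | ⟨w, u, v, huw, hwv, hfw, rfl⟩) q'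
      (⟨u', -, rfl⟩ | ⟨w', u', v', huw', hwv', hfw', rfl⟩)
    · exact ⟨by rintro ⟨rfl, -⟩; rfl, by rintro ⟨rfl, -⟩; simp⟩
    · exact ⟨fun h => absurd (h.1.symm.trans h.2) (hne hfw'),
        fun h => absurd (h.2.symm.trans h.1) (hne hfw')⟩
    · exact ⟨fun h => absurd (h.1.trans h.2.symm) (hne hfw),
        fun h => absurd (h.1.trans h.2.symm) (hne hfw)⟩
    · constructor
      · rintro ⟨rfl, rfl⟩
        obtain rfl : w = w' := hf (hfw.trans hfw'.symm)
        rfl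
      · rintro ⟨rfl, rfl⟩
        obtain rfl : w = w' := hf (by rw [hfw, hfw', Sym2.eq_swap])
        simp
  · intro x
    by_cases hx : x ∈ S
    · exact ⟨⟨x, x, .nil⟩, .inl ⟨x, hx, rfl⟩, Walk.start_mem_support _⟩
    · obtain ⟨⟨u, v⟩, hfx⟩ := Quot.exists_rep (f ⟨x, hx⟩)
      replace hfx : f ⟨x, hx⟩ = s(u, v) := hfx.symm
      have huw : G.Adj u x := (hS _ u (hfx ▸ Sym2.mem_mk_left u v)).2
      have hwv : G.Adj x v := (hS _ v (hfx ▸ Sym2.mem_mk_right u v)).2.symm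
      exact ⟨⟨u, v, .cons huw (.cons hwv .nil)⟩, .inr ⟨_, u, v, huw, hwv, hfx, rfl⟩, by simp⟩

end StrongGeodetic

section CompleteMultipartite

variable {ι : Type*} {V : ι → Type*}

theorem Sym2.sigma_map_injective :
    Function.Injective fun p : Σ i, Sym2 (V i) => p.2.map (Sigma.mk p.1) := by
  rintro ⟨i, z⟩ ⟨j, z'⟩ h
  induction z using Sym2.ind with | _ a b => ?_
  induction z' using Sym2.ind with | _ a' b' => ?_
  simp only [Sym2.map_mk, Sym2.eq_iff, Sigma.mk.injEq] at h
  rcases h with ⟨⟨rfl, ha⟩, -, hb⟩ | ⟨⟨rfl, ha⟩, -, hb⟩ <;> cases ha <;> cases hb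
  · rfl
  · rw [Sym2.eq_swap]

theorem completeMultipartiteGraph.map_sigmaMk_notMem_edgeSet (i : ι) (z : Sym2 (V i)) :
    z.map (Sigma.mk i) ∉ (completeMultipartiteGraph V).edgeSet := by
  induction z using Sym2.ind with | _ a b => simp [Sym2.map_mk]

variable [Fintype ι] [∀ i, Fintype (V i)]

theorem Fintype.card_subtype_sigma_fst_mem [DecidableEq ι] (A : Finset ι) :
    Fintype.card {v : Σ i, V i // v.1 ∈ A} = ∑ i ∈ A, Fintype.card (V i) := by
  rw [Fintype.card_congr (Equiv.subtypeSigmaEquiv V (· ∈ A)), Fintype.card_sigma,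
    Finset.sum_coe_sort A fun i => Fintype.card (V i)]

theorem strongGeodeticNumber_completeMultipartiteGraph_le [DecidableEq ι] (A : Finset ι)
    (h : ∑ i ∈ Aᶜ, Fintype.card (V i) ≤ ∑ i ∈ A, (Fintype.card (V i)).choose 2) :
    strongGeodeticNumber (completeMultipartiteGraph V) ≤ ∑ i ∈ A, Fintype.card (V i) := by
  classical
  have hcard : Fintype.card {v : Σ i, V i // v.1 ∉ A} ≤
      Fintype.card (Σ i : A, {z : Sym2 (V i) // ¬ z.IsDiag}) := by
    have hout := Fintype.card_subtype_sigma_fst_mem (V := V) Aᶜ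
    simp only [Finset.mem_compl] at hout
    rw [hout, Fintype.card_sigma]
    simpa only [Sym2.card_subtype_not_diag,
      Finset.sum_coe_sort A fun i => (Fintype.card (V i)).choose 2] using h
  obtain ⟨e⟩ := Function.Embedding.nonempty_of_card_le hcard
  let f (w : {v : Σ i, V i // v.1 ∉ A}) : Sym2 (Σ i, V i) := (e w).2.1.map (Sigma.mk (e w).1.1)
  have hgeod : IsStrongGeodeticSet (completeMultipartiteGraph V) {v | v.1 ∈ A} := by
    refine isStrongGeodeticSet_of_injective (f := f) ?_ ?_ ?_ ?_
    · exact Sym2.sigma_map_injective.comp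
        ((Subtype.val_injective.sigma_map fun _ => Subtype.val_injective).comp e.injective)
    · intro w x hx
      obtain ⟨a, -, rfl⟩ := Sym2.mem_map.1 hx
      exact ⟨(e w).1.2, fun h => w.2 (by simp [← h])⟩
    · exact fun w => (Sym2.isDiag_map sigma_mk_injective).not.2 (e w).2.2
    · exact fun w => completeMultipartiteGraph.map_sigmaMk_notMem_edgeSet _ _
  calc strongGeodeticNumber (completeMultipartiteGraph V) ≤ {v : Σ i, V i | v.1 ∈ A}.ncard :=
        strongGeodeticNumber_le_ncard hgeod
    _ = ∑ i ∈ A, Fintype.card (V i) :=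
        Nat.card_eq_fintype_card.trans (Fintype.card_subtype_sigma_fst_mem A)

end CompleteMultipartite

theorem Nat.sub_min_mul_le_min_mul_choose_two {k m t : ℕ} (h : 2 * m ≤ t * (k + 1)) :
    (m - min t m) * k ≤ min t m * k.choose 2 := by
  rcases le_total t m with htm | hmt
  · rw [min_eq_left htm]
    have hchoose : 2 * k.choose 2 = k * (k - 1) := by
      rw [Nat.choose_two_right, Nat.mul_div_cancel' (Nat.even_mul_pred_self k).two_dvd]
    have hparts : 2 * (m - t) ≤ t * (k - 1) := by
      rw [Nat.mul_sub_one]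
      rw [Nat.mul_succ] at h
      omega
    refine Nat.le_of_mul_le_mul_left ?_ two_pos
    calc 2 * ((m - t) * k) = 2 * (m - t) * k := by ring
      _ ≤ t * (k - 1) * k := Nat.mul_le_mul_right k hparts
      _ = 2 * (t * k.choose 2) := by rw [mul_left_comm, hchoose]; ring
  · simp [min_eq_right hmt]

theorem strongGeodeticNumber_completeMultipartiteGraph_fin_le {k m t : ℕ}
    (h : 2 * m ≤ t * (k + 1)) :
    strongGeodeticNumber (completeMultipartiteGraph fun _ : Fin m => Fin k) ≤ t * k := by
  obtain ⟨A, -, hA⟩ := Finset.exists_subset_card_eq (s := (univ : Finset (Fin m)))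
    (n := min t m) (by simp)
  calc strongGeodeticNumber (completeMultipartiteGraph fun _ : Fin m => Fin k)
      ≤ ∑ _i ∈ A, Fintype.card (Fin k) := by
        refine strongGeodeticNumber_completeMultipartiteGraph_le A ?_
        simpa [Finset.card_compl, hA] using Nat.sub_min_mul_le_min_mul_choose_two h
    _ ≤ t * k := by simpa [hA] using Nat.mul_le_mul_right k (min_le_left t m)

theorem sg_balanced_multipartite_upper_general (k m : ℕ) :
    (strongGeodeticNumber (SimpleGraph.completeMultipartiteGraph (fun _ : Fin m => Fin k)) : ℤ) ≤
      ⌈(2 * m : ℚ) / (k + 1)⌉ * k := by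
  have hceil : 2 * m ≤ ⌈(2 * m : ℚ) / (k + 1)⌉₊ * (k + 1) := by
    have := Nat.le_ceil ((2 * m : ℚ) / (k + 1))
    rw [div_le_iff₀ (by positivity)] at this
    exact_mod_cast this
  rw [← Int.natCast_ceil_eq_ceil (by positivity)]
  exact_mod_cast strongGeodeticNumber_completeMultipartiteGraph_fin_le hceil

theorem sg_balanced_multipartite_upper (k m : ℕ) (hk : 0 < k) (hm : 0 < m) :
    (strongGeodeticNumber (SimpleGraph.completeMultipartiteGraph (fun _ : Fin m => Fin k)) : ℤ) ≤
      ⌈(2 * m : ℚ) / (k + 1)⌉ * k :=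
  sg_balanced_multipartite_upper_general k m
end

section
/- Let n₁, n₂, s₁, s₂ be nonnegative integers with s₁ ≤ n₁, s₂ ≤ n₂, C(s₂,2) ≥ n₁ − s₁ and C(s₁,2) ≥ n₂ − s₂, where n₁, n₂ ≥ 1. Then sg(K_{n₁,n₂}) ≤ s₁ + s₂. -/
section AuxSG


lemma sort_lt {α} [LinearOrder α] {z : Sym2 α} (hz : ¬ z.IsDiag) :
    (Sym2.sortEquiv z).1.1 < (Sym2.sortEquiv z).1.2 := by
  induction z using Sym2.ind with
  | _ a b =>
    simp only [Sym2.sortEquiv_apply_coe, Sym2.inf_mk, Sym2.sup_mk]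
    exact inf_lt_sup.2 (by simpa using hz)

lemma emb_lt_pairs (m k : ℕ) (hk : k ≤ m.choose 2) :
    Nonempty (Fin k ↪ {p : Fin m × Fin m // p.1 < p.2}) := by
  classical
  let g : {z : Sym2 (Fin m) // ¬ z.IsDiag} → {p : Fin m × Fin m // p.1 < p.2} :=
    fun z => ⟨(Sym2.sortEquiv z.1).1, sort_lt z.2⟩
  have hg : Function.Injective g := by
    intro z z' h
    apply Subtype.ext
    apply Sym2.sortEquiv.injective
    have hv : (g z).val = (g z').val := congrArg Subtype.val h
    exact Subtype.ext hv
  have e := Fintype.equivFinOfCardEq (by simpa using Sym2.card_subtype_not_diag (α := Fin m) : Fintype.card {z : Sym2 (Fin m) // ¬ z.IsDiag} = m.choose 2)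
  exact ⟨(Fin.castLEEmb hk).trans ((e.symm.toEmbedding).trans ⟨g, hg⟩)⟩

section graph
variable {n₁ n₂ : ℕ}

lemma adjRL (x : Fin n₂) (i : Fin n₁) :
    (completeBipartiteGraph (Fin n₁) (Fin n₂)).Adj (.inr x) (.inl i) := by simp

lemma adjLR (i : Fin n₁) (x : Fin n₂) :
    (completeBipartiteGraph (Fin n₁) (Fin n₂)).Adj (.inl i) (.inr x) := by simp

def wMidL (x y : Fin n₂) (i : Fin n₁) :
    (completeBipartiteGraph (Fin n₁) (Fin n₂)).Walk (.inr x) (.inr y) :=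
  .cons (adjRL x i) (.cons (adjLR i y) .nil)

def wMidR (a b : Fin n₁) (j : Fin n₂) :
    (completeBipartiteGraph (Fin n₁) (Fin n₂)).Walk (.inl a) (.inl b) :=
  .cons (adjLR a j) (.cons (adjRL j b) .nil)

lemma support_wMidL (x y : Fin n₂) (i : Fin n₁) :
    (wMidL x y i).support = [.inr x, .inl i, .inr y] := rfl

lemma support_wMidR (a b : Fin n₁) (j : Fin n₂) :
    (wMidR a b j).support = [.inl a, .inr j, .inl b] := rfl

lemma isPath_wMidL {x y : Fin n₂} (h : x ≠ y) (i : Fin n₁) : (wMidL x y i).IsPath := by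
  rw [SimpleGraph.Walk.isPath_def, support_wMidL]
  simp [h]

lemma isPath_wMidR {a b : Fin n₁} (h : a ≠ b) (j : Fin n₂) : (wMidR a b j).IsPath := by
  rw [SimpleGraph.Walk.isPath_def, support_wMidR]
  simp [h]

lemma distRR {x y : Fin n₂} (h : x ≠ y) (i : Fin n₁) :
    (completeBipartiteGraph (Fin n₁) (Fin n₂)).dist (.inr x) (.inr y) = 2 := by
  have hle := SimpleGraph.dist_le (wMidL x y i)
  have hlen : (wMidL x y i).length = 2 := rfl
  rw [hlen] at hle
  have h1 : (completeBipartiteGraph (Fin n₁) (Fin n₂)).dist (.inr x) (.inr y) ≠ 1 :=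
    fun hd => by simpa using SimpleGraph.dist_eq_one_iff_adj.mp hd
  have h0 : (completeBipartiteGraph (Fin n₁) (Fin n₂)).dist (.inr x) (.inr y) ≠ 0 := by
    intro hd
    rcases SimpleGraph.dist_eq_zero_iff_eq_or_not_reachable.mp hd with h' | h'
    · exact h (by simpa using h')
    · exact h' (wMidL x y i).reachable
  omega

lemma distLL {a b : Fin n₁} (h : a ≠ b) (j : Fin n₂) :
    (completeBipartiteGraph (Fin n₁) (Fin n₂)).dist (.inl a) (.inl b) = 2 := by
  have hle := SimpleGraph.dist_le (wMidR a b j)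
  have hlen : (wMidR a b j).length = 2 := rfl
  rw [hlen] at hle
  have h1 : (completeBipartiteGraph (Fin n₁) (Fin n₂)).dist (.inl a) (.inl b) ≠ 1 :=
    fun hd => by simpa using SimpleGraph.dist_eq_one_iff_adj.mp hd
  have h0 : (completeBipartiteGraph (Fin n₁) (Fin n₂)).dist (.inl a) (.inl b) ≠ 0 := by
    intro hd
    rcases SimpleGraph.dist_eq_zero_iff_eq_or_not_reachable.mp hd with h' | h'
    · exact h (by simpa using h')
    · exact h' (wMidR a b j).reachable
  omega

end graph

end AuxSG

theorem sg_le_of_feasible (n₁ n₂ s₁ s₂ : ℕ) (hn₁ : 1 ≤ n₁) (hn₂ : 1 ≤ n₂)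
    (hs₁ : s₁ ≤ n₁) (hs₂ : s₂ ≤ n₂)
    (h₁ : n₁ - s₁ ≤ s₂.choose 2) (h₂ : n₂ - s₂ ≤ s₁.choose 2) :
    strongGeodeticNumber (completeBipartiteGraph (Fin n₁) (Fin n₂)) ≤ s₁ + s₂ := by
  classical
  obtain ⟨f₂⟩ := emb_lt_pairs s₂ (n₁ - s₁) h₁
  obtain ⟨f₁⟩ := emb_lt_pairs s₁ (n₂ - s₂) h₂
  set F : {i : Fin n₁ // s₁ ≤ i.val} → {p : Fin s₂ × Fin s₂ // p.1 < p.2} :=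
    fun i => f₂ ⟨i.1.val - s₁, by omega⟩ with hFdef
  have hF : Function.Injective F := by
    intro i i' h
    have h' := congrArg Fin.val (f₂.injective h)
    simp only at h'
    have := i.2; have := i'.2
    exact Subtype.ext (Fin.ext (by omega))
  set E : {j : Fin n₂ // s₂ ≤ j.val} → {p : Fin s₁ × Fin s₁ // p.1 < p.2} :=
    fun j => f₁ ⟨j.1.val - s₂, by omega⟩ with hEdef
  have hE : Function.Injective E := by
    intro j j' h
    have h' := congrArg Fin.val (f₁.injective h)
    simp only at h'
    have := j.2; have := j'.2
    exact Subtype.ext (Fin.ext (by omega))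
  set S : Set (Fin n₁ ⊕ Fin n₂) :=
    (fun t : Fin s₁ => Sum.inl (Fin.castLE hs₁ t)) '' Set.univ ∪
    (fun t : Fin s₂ => Sum.inr (Fin.castLE hs₂ t)) '' Set.univ with hSdef
  have memSl : ∀ t : Fin s₁, Sum.inl (Fin.castLE hs₁ t) ∈ S :=
    fun t => Or.inl ⟨t, trivial, rfl⟩
  have memSr : ∀ t : Fin s₂, Sum.inr (Fin.castLE hs₂ t) ∈ S :=
    fun t => Or.inr ⟨t, trivial, rfl⟩
  have hScard : S.ncard = s₁ + s₂ := by
    have hinjl : Function.Injective (fun t : Fin s₁ => (Sum.inl (Fin.castLE hs₁ t) : Fin n₁ ⊕ Fin n₂)) :=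
      fun a b h => Fin.castLE_injective hs₁ (Sum.inl_injective h)
    have hinjr : Function.Injective (fun t : Fin s₂ => (Sum.inr (Fin.castLE hs₂ t) : Fin n₁ ⊕ Fin n₂)) :=
      fun a b h => Fin.castLE_injective hs₂ (Sum.inr_injective h)
    rw [hSdef, Set.ncard_union_eq ?dis (Set.toFinite _) (Set.toFinite _),
      Set.ncard_image_of_injective _ hinjl, Set.ncard_image_of_injective _ hinjr,
      Set.ncard_univ, Set.ncard_univ]
    · simp
    case dis =>
      rw [Set.disjoint_left]
      rintro v ⟨t, -, rfl⟩ ⟨t', -, h⟩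
      simp at h
  apply Nat.sInf_le
  refine ⟨S, hScard, ?_⟩
  set P : Set ((u : Fin n₁ ⊕ Fin n₂) × (v : Fin n₁ ⊕ Fin n₂) ×
      (completeBipartiteGraph (Fin n₁) (Fin n₂)).Walk u v) :=
    {q | (∃ t : Fin s₁, q = ⟨Sum.inl (Fin.castLE hs₁ t), Sum.inl (Fin.castLE hs₁ t), .nil⟩) ∨
         (∃ t : Fin s₂, q = ⟨Sum.inr (Fin.castLE hs₂ t), Sum.inr (Fin.castLE hs₂ t), .nil⟩) ∨
         (∃ i : {i : Fin n₁ // s₁ ≤ i.val},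
            q = ⟨Sum.inr (Fin.castLE hs₂ (F i).1.1), Sum.inr (Fin.castLE hs₂ (F i).1.2),
              wMidL (Fin.castLE hs₂ (F i).1.1) (Fin.castLE hs₂ (F i).1.2) i.1⟩) ∨
         (∃ j : {j : Fin n₂ // s₂ ≤ j.val},
            q = ⟨Sum.inl (Fin.castLE hs₁ (E j).1.1), Sum.inl (Fin.castLE hs₁ (E j).1.2),
              wMidR (Fin.castLE hs₁ (E j).1.1) (Fin.castLE hs₁ (E j).1.2) j.1⟩)} with hPdef
  have hneF : ∀ i, Fin.castLE hs₂ (F i).1.1 ≠ Fin.castLE hs₂ (F i).1.2 := by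
    intro i hc
    exact absurd (Fin.castLE_injective hs₂ hc) (ne_of_lt (F i).2)
  have hneE : ∀ j, Fin.castLE hs₁ (E j).1.1 ≠ Fin.castLE hs₁ (E j).1.2 := by
    intro j hc
    exact absurd (Fin.castLE_injective hs₁ hc) (ne_of_lt (E j).2)
  refine ⟨P, ⟨?_, ?_⟩, ?_⟩
  · rintro q (⟨t, rfl⟩ | ⟨t, rfl⟩ | ⟨i, rfl⟩ | ⟨j, rfl⟩)
    · exact ⟨memSl t, memSl t, SimpleGraph.Walk.IsPath.nil, by simp [SimpleGraph.dist_self]⟩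
    · exact ⟨memSr t, memSr t, SimpleGraph.Walk.IsPath.nil, by simp [SimpleGraph.dist_self]⟩
    · exact ⟨memSr _, memSr _, isPath_wMidL (hneF i) i.1, by rw [distRR (hneF i) i.1]; rfl⟩
    · exact ⟨memSl _, memSl _, isPath_wMidR (hneE j) j.1, by rw [distLL (hneE j) j.1]; rfl⟩
  · rintro q (⟨t, rfl⟩ | ⟨t, rfl⟩ | ⟨i, rfl⟩ | ⟨j, rfl⟩) q'
      (⟨t', rfl⟩ | ⟨t', rfl⟩ | ⟨i', rfl⟩ | ⟨j', rfl⟩) <;>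
    refine ⟨fun hc => ?_, fun hc => ?_⟩ <;>
    obtain ⟨hc1, hc2⟩ := hc <;>
    simp only [Sum.inl.injEq, Sum.inr.injEq, reduceCtorEq] at hc1 hc2
    -- (nilL, nilL)
    · cases Fin.castLE_injective hs₁ hc1; rfl
    · cases Fin.castLE_injective hs₁ hc1; simp
    -- (nilL, wMidR)
    · exact absurd (hc1.symm.trans hc2) (hneE j')
    · exact absurd (hc2.symm.trans hc1) (hneE j')
    -- (nilR, nilR)
    · cases Fin.castLE_injective hs₂ hc1; rfl
    · cases Fin.castLE_injective hs₂ hc1; simp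
    -- (nilR, wMidL)
    · exact absurd (hc1.symm.trans hc2) (hneF i')
    · exact absurd (hc2.symm.trans hc1) (hneF i')
    -- (wMidL, nilR)
    · exact absurd (hc1.trans hc2.symm) (hneF i)
    · exact absurd (hc1.trans hc2.symm) (hneF i)
    -- (wMidL, wMidL)
    · have e1 := Fin.castLE_injective hs₂ hc1
      have e2 := Fin.castLE_injective hs₂ hc2
      cases hF (Subtype.ext (Prod.ext e1 e2)); rfl
    · exfalso
      have e1 := congrArg Fin.val (Fin.castLE_injective hs₂ hc1)
      have e2 := congrArg Fin.val (Fin.castLE_injective hs₂ hc2)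
      have l1 := (F i).2; have l2 := (F i').2
      rw [Fin.lt_def] at l1 l2
      omega
    -- (wMidR, nilL)
    · exact absurd (hc1.trans hc2.symm) (hneE j)
    · exact absurd (hc1.trans hc2.symm) (hneE j)
    -- (wMidR, wMidR)
    · have e1 := Fin.castLE_injective hs₁ hc1
      have e2 := Fin.castLE_injective hs₁ hc2
      cases hE (Subtype.ext (Prod.ext e1 e2)); rfl
    · exfalso
      have e1 := congrArg Fin.val (Fin.castLE_injective hs₁ hc1)
      have e2 := congrArg Fin.val (Fin.castLE_injective hs₁ hc2)
      have l1 := (E j).2; have l2 := (E j').2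
      rw [Fin.lt_def] at l1 l2
      omega
  · intro w
    rcases w with i | j
    · by_cases hi : i.val < s₁
      · refine ⟨_, Or.inl ⟨⟨i.val, hi⟩, rfl⟩, ?_⟩
        simp only [SimpleGraph.Walk.support_nil]
        have : Fin.castLE hs₁ ⟨i.val, hi⟩ = i := rfl
        simp [this]
      · refine ⟨_, Or.inr (Or.inr (Or.inl ⟨⟨i, le_of_not_gt hi⟩, rfl⟩)), ?_⟩
        rw [support_wMidL]
        simp
    · by_cases hj : j.val < s₂
      · refine ⟨_, Or.inr (Or.inl ⟨⟨j.val, hj⟩, rfl⟩), ?_⟩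
        simp only [SimpleGraph.Walk.support_nil]
        have : Fin.castLE hs₂ ⟨j.val, hj⟩ = j := rfl
        simp [this]
      · refine ⟨_, Or.inr (Or.inr (Or.inr ⟨⟨j, le_of_not_gt hj⟩, rfl⟩)), ?_⟩
        rw [support_wMidR]
        simp
end

section
/- Let G be a bipartite graph with bipartition (X,Y) and let G' be obtained from G by adding vertices u₁, u₂ and, for each x ∈ X a new vertex x', for each y ∈ Y a new vertex y', with edges u₁u₂, {x u₂, u₂ x' : x ∈ X}, {y u₁, u₁ y' : y ∈ Y}. If D is a dominating set of G with |D| ≤ k, then D ∪ {x' : x ∈ X} ∪ {y' : y ∈ Y} is a strong geodetic set of G' of size at most k + |V(G)|. -/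
/-- The vertex `u₁` in the construction `G'`. -/
def uOne {V : Type*} : V ⊕ V ⊕ Bool := Sum.inr (Sum.inr false)

/-- The vertex `u₂` in the construction `G'`. -/
def uTwo {V : Type*} : V ⊕ V ⊕ Bool := Sum.inr (Sum.inr true)

/-- The copy `v'` of a vertex `v` in the construction `G'`. -/
def copyOf {V : Type*} (v : V) : V ⊕ V ⊕ Bool := Sum.inr (Sum.inl v)

/-- The relation generating the graph `G'` obtained from a bipartite `G` with parts `X, Y`
by adding `u₁, u₂` and copies `x'` (`x ∈ X`), `y'` (`y ∈ Y`), with edges `u₁u₂`,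
`x u₂`, `u₂ x'` for `x ∈ X`, and `y u₁`, `u₁ y'` for `y ∈ Y`. -/
def gPrimeRel {V : Type*} (G : SimpleGraph V) (X Y : Set V) :
    (V ⊕ V ⊕ Bool) → (V ⊕ V ⊕ Bool) → Prop := fun a b =>
  match a, b with
  | Sum.inl u, Sum.inl v => G.Adj u v
  | Sum.inr (Sum.inr false), Sum.inr (Sum.inr true) => True
  | Sum.inl v, Sum.inr (Sum.inr true) => v ∈ X
  | Sum.inl v, Sum.inr (Sum.inr false) => v ∈ Y
  | Sum.inr (Sum.inr true), Sum.inr (Sum.inl v) => v ∈ X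
  | Sum.inr (Sum.inr false), Sum.inr (Sum.inl v) => v ∈ Y
  | _, _ => False

/-- The graph `G'` of the reduction. -/
def gPrime {V : Type*} (G : SimpleGraph V) (X Y : Set V) : SimpleGraph (V ⊕ V ⊕ Bool) :=
  SimpleGraph.fromRel (gPrimeRel G X Y)

/-!
Every vertex `v` of `G` lies on a shortest path of `G'` from a vertex `d ∈ D` to its copy `v'`:
either `v ∈ D` and the path is `v, h, v'`, or a neighbour `d ∈ D` of `v` gives `d, v, h, v'`,
where `h ∈ {u₁, u₂}` is the only neighbour of `v'`. The second path is a geodesic because `d`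
lies in the other side of the bipartition, so `d` is not adjacent to `h`. Fixing one such path
for each copy `v'` covers `V(G)`, every copy, and (as `X` and `Y` are nonempty) both `u₁` and `u₂`.
-/

namespace SimpleGraph

variable {W : Type*} {H : SimpleGraph W} {a b : W}

lemma Walk.length_eq_dist_of_length_eq_two (p : H.Walk a b) (hp : p.length = 2) (hne : a ≠ b)
    (hnadj : ¬H.Adj a b) : p.length = H.dist a b := by
  have := Reachable.one_lt_dist_of_ne_of_not_adj ⟨p⟩ hne hnadj
  have := dist_le p
  omega

lemma Walk.length_eq_dist_of_length_eq_three (p : H.Walk a b) (hp : p.length = 3) (hne : a ≠ b)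
    (hnadj : ¬H.Adj a b) (hcommon : H.commonNeighbors a b = ∅) : p.length = H.dist a b := by
  have h : 2 < H.edist a b := two_lt_edist_iff.mpr ⟨hne, hnadj, hcommon⟩
  rw [← Reachable.coe_dist_eq_edist ⟨p⟩] at h
  have := dist_le p
  norm_cast at h
  omega

end SimpleGraph

/-- Distinct targets that are never sources make the uniqueness and reversal conditions of a
geodesic selection vacuous. -/
theorem isStrongGeodeticSet_of_geodesics {W ι : Type*} {H : SimpleGraph W} {S : Set W}
    {src tgt : ι → W} (p : ∀ i, H.Walk (src i) (tgt i))
    (hgeo : ∀ i, (p i).length = H.dist (src i) (tgt i))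
    (hsrc : ∀ i, src i ∈ S) (htgt : ∀ i, tgt i ∈ S) (htgt_inj : Function.Injective tgt)
    (hsep : ∀ i j, src i ≠ tgt j) (hcover : ∀ w, ∃ i, w ∈ (p i).support) :
    IsStrongGeodeticSet H S := by
  refine ⟨Set.range fun i ↦ ⟨src i, tgt i, p i⟩, ⟨?_, ?_⟩, fun w ↦ ?_⟩
  · rintro _ ⟨i, rfl⟩
    exact ⟨hsrc i, htgt i, (p i).isPath_of_length_eq_dist (hgeo i), hgeo i⟩
  · rintro _ ⟨i, rfl⟩ _ ⟨j, rfl⟩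
    refine ⟨fun ⟨_, h⟩ ↦ ?_, fun ⟨h, _⟩ ↦ (hsep i j h).elim⟩
    obtain rfl := htgt_inj h
    rfl
  · obtain ⟨i, hi⟩ := hcover w
    exact ⟨_, ⟨i, rfl⟩, hi⟩

section gPrime

variable {V : Type*} {G : SimpleGraph V} {X : Set V}

open Classical in
noncomputable def gPrimeHub (X : Set V) (v : V) : V ⊕ V ⊕ Bool :=
  if v ∈ X then uTwo else uOne

lemma gPrimeHub_of_mem {v : V} (h : v ∈ X) : gPrimeHub X v = uTwo := if_pos h

lemma gPrimeHub_of_notMem {v : V} (h : v ∉ X) : gPrimeHub X v = uOne := if_neg h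

lemma copyOf_injective : Function.Injective (copyOf (V := V)) := fun _ _ h ↦ by
  simpa [copyOf] using h

lemma gPrime_adj_inl_inl {Y : Set V} {u v : V} :
    (gPrime G X Y).Adj (.inl u) (.inl v) ↔ G.Adj u v := by
  simp only [gPrime, gPrimeRel, SimpleGraph.fromRel_adj, ne_eq, Sum.inl.injEq, G.adj_comm v u,
    or_self]
  exact ⟨And.right, fun h ↦ ⟨h.ne, h⟩⟩

lemma gPrime_adj_copyOf_iff {a : V ⊕ V ⊕ Bool} {v : V} :
    (gPrime G X Xᶜ).Adj a (copyOf v) ↔ a = gPrimeHub X v := by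
  unfold gPrimeHub
  rcases a with u | u | (_ | _) <;> by_cases hv : v ∈ X <;>
    simp [gPrime, gPrimeRel, copyOf, uOne, uTwo, hv]

lemma gPrime_adj_inl_gPrimeHub_iff {u v : V} :
    (gPrime G X Xᶜ).Adj (.inl u) (gPrimeHub X v) ↔ (u ∈ X ↔ v ∈ X) := by
  unfold gPrimeHub
  by_cases hv : v ∈ X <;> simp [gPrime, gPrimeRel, uOne, uTwo, hv]

lemma gPrime_not_adj_inl_copyOf {Y : Set V} {u v : V} :
    ¬(gPrime G X Y).Adj (.inl u) (copyOf v) := by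
  simp [gPrime, gPrimeRel, copyOf]

lemma gPrime_commonNeighbors_inl_copyOf {u v : V} (h : ¬(u ∈ X ↔ v ∈ X)) :
    (gPrime G X Xᶜ).commonNeighbors (.inl u) (copyOf v) = ∅ := by
  refine Set.eq_empty_of_forall_notMem fun w hw ↦ h ?_
  obtain ⟨hu, hv⟩ := (SimpleGraph.mem_commonNeighbors _).mp hw
  obtain rfl := gPrime_adj_copyOf_iff.mp hv.symm
  exact gPrime_adj_inl_gPrimeHub_iff.mp hu

noncomputable def gPrimeWalkInlCopyOf (v : V) : (gPrime G X Xᶜ).Walk (.inl v) (copyOf v) :=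
  .cons (gPrime_adj_inl_gPrimeHub_iff.mpr Iff.rfl) (.cons (gPrime_adj_copyOf_iff.mpr rfl) .nil)

lemma gPrime_exists_geodesic (hbip : ∀ u v, G.Adj u v → ¬(u ∈ X ↔ v ∈ X)) {D : Set V}
    (hdom : ∀ v, v ∉ D → ∃ u ∈ D, G.Adj u v) (v : V) :
    ∃ d ∈ D, ∃ p : (gPrime G X Xᶜ).Walk (.inl d) (copyOf v),
      p.length = (gPrime G X Xᶜ).dist (.inl d) (copyOf v) ∧
        .inl v ∈ p.support ∧ gPrimeHub X v ∈ p.support := by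
  by_cases hv : v ∈ D
  · refine ⟨v, hv, gPrimeWalkInlCopyOf v, ?_, by simp [gPrimeWalkInlCopyOf]⟩
    exact (gPrimeWalkInlCopyOf v).length_eq_dist_of_length_eq_two rfl (by simp [copyOf])
      gPrime_not_adj_inl_copyOf
  · obtain ⟨d, hd, hdv⟩ := hdom v hv
    refine ⟨d, hd, .cons (gPrime_adj_inl_inl.mpr hdv) (gPrimeWalkInlCopyOf v), ?_,
      by simp [gPrimeWalkInlCopyOf]⟩
    exact SimpleGraph.Walk.length_eq_dist_of_length_eq_three _ rfl (by simp [copyOf])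
      gPrime_not_adj_inl_copyOf (gPrime_commonNeighbors_inl_copyOf (hbip d v hdv))

lemma ncard_image_inl_union_copyOf_le (D : Set V) :
    (Sum.inl '' D ∪ copyOf '' X ∪ copyOf '' Xᶜ).ncard ≤ D.ncard + Nat.card V := by
  rw [Set.union_assoc, ← Set.image_union, Set.union_compl_self, Set.image_univ]
  refine (Set.ncard_union_le _ _).trans_eq ?_
  rw [Set.ncard_image_of_injective _ Sum.inl_injective, Set.ncard_range_of_injective copyOf_injective]

end gPrime

theorem dominating_gives_strong_geodetic_general {V : Type*}
    (G : SimpleGraph V) (X Y : Set V) (hX : X.Nonempty) (hY : Y.Nonempty)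
    (hunion : X ∪ Y = Set.univ) (hdisj : X ∩ Y = ∅)
    (hbip : ∀ u v, G.Adj u v → (u ∈ X ∧ v ∈ Y) ∨ (u ∈ Y ∧ v ∈ X))
    (D : Set V) (k : ℕ)
    (hdom : ∀ v, v ∉ D → ∃ u ∈ D, G.Adj u v) (hD : D.ncard ≤ k) :
    IsStrongGeodeticSet (gPrime G X Y) (Sum.inl '' D ∪ copyOf '' X ∪ copyOf '' Y) ∧
      (Sum.inl '' D ∪ copyOf '' X ∪ copyOf '' Y).ncard ≤ k + Nat.card V := by
  obtain rfl : Y = Xᶜ := (IsCompl.of_eq hdisj hunion).compl_eq.symm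
  have hbip' : ∀ u v, G.Adj u v → ¬(u ∈ X ↔ v ∈ X) := fun u v h ↦ by
    rcases hbip u v h with ⟨hu, hv⟩ | ⟨hu, hv⟩ <;> simp_all
  choose src hsrc p hgeo hmem hhub using gPrime_exists_geodesic hbip' hdom
  refine ⟨isStrongGeodeticSet_of_geodesics p hgeo (fun v ↦ .inl (.inl ⟨_, hsrc v, rfl⟩))
    (fun v ↦ ?_) copyOf_injective (fun _ _ ↦ Sum.inl_ne_inr) ?_,
    (ncard_image_inl_union_copyOf_le D).trans (by omega)⟩
  · by_cases hv : v ∈ X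
    · exact .inl (.inr ⟨v, hv, rfl⟩)
    · exact .inr ⟨v, hv, rfl⟩
  · rintro (v | v | (_ | _))
    · exact ⟨v, hmem v⟩
    · exact ⟨v, (p v).end_mem_support⟩
    · obtain ⟨y, hy⟩ := hY
      exact ⟨y, (gPrimeHub_of_notMem hy ▸ hhub y : uOne ∈ _)⟩
    · obtain ⟨x, hx⟩ := hX
      exact ⟨x, (gPrimeHub_of_mem hx ▸ hhub x : uTwo ∈ _)⟩

/-- If `D` is a dominating set of bipartite `G` with `|D| ≤ k`, then
`D ∪ {x' : x ∈ X} ∪ {y' : y ∈ Y}` is a strong geodetic set of `G'` of size at most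
`k + |V(G)|`. -/
theorem dominating_gives_strong_geodetic {V : Type*} [Fintype V]
    (G : SimpleGraph V) (X Y : Set V) (hX : X.Nonempty) (hY : Y.Nonempty)
    (hunion : X ∪ Y = Set.univ) (hdisj : X ∩ Y = ∅)
    (hbip : ∀ u v, G.Adj u v → (u ∈ X ∧ v ∈ Y) ∨ (u ∈ Y ∧ v ∈ X))
    (D : Set V) (k : ℕ)
    (hdom : ∀ v, v ∉ D → ∃ u ∈ D, G.Adj u v) (hD : D.ncard ≤ k) :
    IsStrongGeodeticSet (gPrime G X Y) (Sum.inl '' D ∪ copyOf '' X ∪ copyOf '' Y) ∧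
      (Sum.inl '' D ∪ copyOf '' X ∪ copyOf '' Y).ncard ≤ k + Nat.card V :=
  dominating_gives_strong_geodetic_general G X Y hX hY hunion hdisj hbip D k hdom hD
end
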